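/- arXiv:1601.00920 — 8 statements merged into one kernel-verified Lean document; each statement's English description precedes it below -/
import Mathlib

section
/- Let Z be a compact totally disconnected metric space. The set of finite Borel measures on Z is in bijection with the set of positive Z-linear homomorphisms from C(Z, ℤ) (continuous integer-valued functions on Z) to ℝ, where a homomorphism is positive if it sends nonnegative functions to nonnegative reals; the bijection sends a measure μ to the functional f ↦ ∫ f dμ. -/
/-!
A positive functional `φ` gives a finitely additive content `U ↦ φ 𝟙_U` on the ring of clopen
sets. Clopen sets are compact and open, so a countable clopen cover of a clopen set has a finite
subcover; hence this content is automatically σ-subadditive and extends to a measure. Clopen sets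
generate the Borel σ-algebra of a compact metrizable totally disconnected space, which gives
uniqueness, and every `f ∈ C(Z, ℤ)` is a finite `ℤ`-combination of indicators of its fibres, so
additive maps on `C(Z, ℤ)` are determined by their values on clopen indicators.
-/

open MeasureTheory TopologicalSpace Set LocallyConstant

open scoped ENNReal

section Topology

variable {X : Type*} [TopologicalSpace X]

theorem charFn_nonneg {U : Set X} (hU : IsClopen U) (z : X) :
    0 ≤ (charFn ℤ hU : C(X, ℤ)) z := by
  by_cases hz : z ∈ U <;> simp [coe_charFn, hz]

theorem charFn_empty : (charFn ℤ (isClopen_empty (X := X)) : C(X, ℤ)) = 0 := by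
  ext
  simp [coe_charFn]

theorem charFn_union_of_disjoint {U V : Set X} (hU : IsClopen U) (hV : IsClopen V)
    (hUV : Disjoint U V) :
    (charFn ℤ (hU.union hV) : C(X, ℤ)) = charFn ℤ hU + charFn ℤ hV := by
  ext z
  simp [coe_charFn, indicator_union_of_disjoint hUV]

theorem AddMonoidHom.ext_charFn [CompactSpace X] {M : Type*} [AddCommGroup M]
    {ψ₁ ψ₂ : C(X, ℤ) →+ M}
    (h : ∀ (U : Set X) (hU : IsClopen U), ψ₁ (charFn ℤ hU) = ψ₂ (charFn ℤ hU)) : ψ₁ = ψ₂ := by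
  ext f
  have hfin : (Set.range f).Finite := (isCompact_range f.continuous).finite_of_discrete
  have hfiber (n : ℤ) : IsClopen (f ⁻¹' {n}) := (isClopen_discrete {n}).preimage f.continuous
  have hdecomp : f = ∑ n ∈ hfin.toFinset, n • (charFn ℤ (hfiber n) : C(X, ℤ)) := by
    ext z
    simp [coe_charFn, Set.indicator]
  rw [hdecomp, map_sum, map_sum]
  exact Finset.sum_congr rfl fun n _ => by rw [map_zsmul, map_zsmul, h]

theorem isSetRing_isClopen : IsSetRing {s : Set X | IsClopen s} where
  empty_mem := isClopen_empty
  union_mem _ _ := IsClopen.union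
  sdiff_mem _ _ := IsClopen.diff

theorem MeasureTheory.AddContent.isSigmaSubadditive_of_isCompact_of_isOpen {C : Set (Set X)}
    (hC : IsSetRing C) (hcpt : ∀ s ∈ C, IsCompact s) (hopen : ∀ s ∈ C, IsOpen s)
    (m : AddContent ℝ≥0∞ C) : m.IsSigmaSubadditive := by
  intro f hf hU
  obtain ⟨t, ht⟩ := (hcpt _ hU).elim_finite_subcover f (fun i => hopen _ (hf i)) subset_rfl
  calc m (⋃ i, f i) ≤ m (⋃ i ∈ t, f i) :=
        addContent_mono hC.isSetSemiring hU (hC.biUnion_mem t fun i _ => hf i) ht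
    _ ≤ ∑ i ∈ t, m (f i) := addContent_biUnion_le hC fun i _ => hf i
    _ ≤ ∑' i, m (f i) := ENNReal.sum_le_tsum t

theorem borel_eq_generateFrom_isClopen [T2Space X] [CompactSpace X] [TotallyDisconnectedSpace X]
    [SecondCountableTopology X] : borel X = .generateFrom {s : Set X | IsClopen s} :=
  isTopologicalBasis_isClopen.borel_eq_generateFrom

end Topology

section Integration

variable {X : Type*} [TopologicalSpace X] [MeasurableSpace X]

theorem integrable_intCast_comp [CompactSpace X] [OpensMeasurableSpace X] (μ : Measure X)
    [IsFiniteMeasure μ] (f : C(X, ℤ)) : Integrable (fun z => (f z : ℝ)) μ :=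
  (continuous_of_discreteTopology.comp f.continuous).integrable_of_hasCompactSupport
    (.of_compactSpace _)

noncomputable def integralAddHom [CompactSpace X] [OpensMeasurableSpace X] (μ : Measure X)
    [IsFiniteMeasure μ] : C(X, ℤ) →+ ℝ where
  toFun f := ∫ z, (f z : ℝ) ∂μ
  map_zero' := by simp
  map_add' f g := by
    simp only [ContinuousMap.add_apply, Int.cast_add]
    exact integral_add (integrable_intCast_comp μ f) (integrable_intCast_comp μ g)

theorem integralAddHom_apply [CompactSpace X] [OpensMeasurableSpace X] (μ : Measure X)
    [IsFiniteMeasure μ] (f : C(X, ℤ)) : integralAddHom μ f = ∫ z, (f z : ℝ) ∂μ :=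
  rfl

theorem integralAddHom_nonneg [CompactSpace X] [OpensMeasurableSpace X] (μ : Measure X)
    [IsFiniteMeasure μ] (f : C(X, ℤ)) (hf : ∀ z, 0 ≤ f z) : 0 ≤ integralAddHom μ f :=
  integral_nonneg fun z => by simpa using hf z

theorem integral_charFn [OpensMeasurableSpace X] (μ : Measure X) {U : Set X} (hU : IsClopen U) :
    ∫ z, ((charFn ℤ hU : C(X, ℤ)) z : ℝ) ∂μ = μ.real U := by
  have hind : (fun z => ((charFn ℤ hU : C(X, ℤ)) z : ℝ)) = U.indicator 1 := by
    ext z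
    by_cases hz : z ∈ U <;> simp [coe_charFn, hz]
  rw [hind, integral_indicator_one hU.isOpen.measurableSet]

variable [T2Space X] [CompactSpace X] [TotallyDisconnectedSpace X] [SecondCountableTopology X]
  [BorelSpace X]

theorem MeasureTheory.Measure.ext_of_isClopen {μ ν : Measure X} [IsFiniteMeasure μ]
    (h : ∀ U, IsClopen U → μ U = ν U) : μ = ν :=
  ext_of_generate_finite _ (BorelSpace.measurable_eq.trans borel_eq_generateFrom_isClopen)
    (fun _ hs _ ht _ => hs.inter ht) h (h _ isClopen_univ)

theorem MeasureTheory.Measure.eq_of_integralAddHom_eq {μ ν : Measure X} [IsFiniteMeasure μ]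
    [IsFiniteMeasure ν] (h : integralAddHom μ = integralAddHom ν) : μ = ν :=
  Measure.ext_of_isClopen fun U hU => by
    have hU' := DFunLike.congr_fun h (charFn ℤ hU : C(X, ℤ))
    rwa [integralAddHom_apply, integralAddHom_apply, integral_charFn, integral_charFn,
      measureReal_eq_measureReal_iff] at hU'

end Integration

section PositiveFunctional

variable {X : Type*} [TopologicalSpace X] (φ : C(X, ℤ) →+ ℝ)
  (hφ : ∀ f : C(X, ℤ), (∀ z, 0 ≤ f z) → 0 ≤ φ f)

open scoped Classical in
noncomputable def clopenContent : AddContent ℝ≥0∞ {s : Set X | IsClopen s} :=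
  isSetRing_isClopen.addContent_of_union
    (fun s => if hs : IsClopen s then ENNReal.ofReal (φ (charFn ℤ hs)) else 0)
    (by simp [charFn_empty])
    fun {s t} (hs : IsClopen s) (ht : IsClopen t) hst => by
      simp only [dif_pos hs, dif_pos ht, dif_pos (hs.union ht), charFn_union_of_disjoint hs ht hst,
        map_add]
      exact ENNReal.ofReal_add (hφ _ (charFn_nonneg hs)) (hφ _ (charFn_nonneg ht))

theorem clopenContent_apply {U : Set X} (hU : IsClopen U) :
    clopenContent φ hφ U = ENNReal.ofReal (φ (charFn ℤ hU)) :=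
  dif_pos hU

variable [T2Space X] [CompactSpace X] [TotallyDisconnectedSpace X] [SecondCountableTopology X]
  [MeasurableSpace X] [BorelSpace X]

noncomputable def clopenMeasure : Measure X :=
  (clopenContent φ hφ).measure isSetRing_isClopen.isSetSemiring
    (BorelSpace.measurable_eq.trans borel_eq_generateFrom_isClopen).le
    (AddContent.isSigmaSubadditive_of_isCompact_of_isOpen isSetRing_isClopen
      (fun _ hs => hs.isClosed.isCompact) (fun _ hs => hs.isOpen) _)

theorem clopenMeasure_apply {U : Set X} (hU : IsClopen U) :
    clopenMeasure φ hφ U = ENNReal.ofReal (φ (charFn ℤ hU)) := by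
  rw [clopenMeasure, AddContent.measure_eq _ _
    (BorelSpace.measurable_eq.trans borel_eq_generateFrom_isClopen) _ hU, clopenContent_apply]

instance : IsFiniteMeasure (clopenMeasure φ hφ) :=
  ⟨by simp [clopenMeasure_apply φ hφ isClopen_univ]⟩

theorem integralAddHom_clopenMeasure : integralAddHom (clopenMeasure φ hφ) = φ :=
  AddMonoidHom.ext_charFn fun U hU => by
    rw [integralAddHom_apply, integral_charFn, measureReal_def, clopenMeasure_apply φ hφ hU,
      ENNReal.toReal_ofReal (hφ _ (charFn_nonneg hU))]

end PositiveFunctional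

/-- For a compact totally disconnected metric space `Z`, the set of finite
Borel measures on `Z` is in bijection with the set of positive `ℤ`-linear homomorphisms
`C(Z, ℤ) → ℝ`, the bijection sending `μ` to `f ↦ ∫ f dμ`. -/
theorem stmt0 (Z : Type*) [MetricSpace Z] [CompactSpace Z] [TotallyDisconnectedSpace Z]
    [MeasurableSpace Z] [BorelSpace Z] :
    ∃ e : {μ : Measure Z // IsFiniteMeasure μ} ≃
        {φ : C(Z, ℤ) →+ ℝ // ∀ f : C(Z, ℤ), (∀ z, 0 ≤ f z) → 0 ≤ φ f},
      ∀ (μ : {μ : Measure Z // IsFiniteMeasure μ}) (f : C(Z, ℤ)),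
        (e μ : C(Z, ℤ) →+ ℝ) f = ∫ z, (f z : ℝ) ∂μ.1 := by
  let T (μ : {μ : Measure Z // IsFiniteMeasure μ}) :
      {φ : C(Z, ℤ) →+ ℝ // ∀ f : C(Z, ℤ), (∀ z, 0 ≤ f z) → 0 ≤ φ f} :=
    have := μ.2
    ⟨integralAddHom μ.1, integralAddHom_nonneg μ.1⟩
  have hinj : T.Injective := fun ⟨μ, _⟩ ⟨ν, _⟩ h =>
    Subtype.ext (Measure.eq_of_integralAddHom_eq (congrArg Subtype.val h))
  have hsurj : T.Surjective := fun ⟨φ, hφ⟩ =>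
    ⟨⟨clopenMeasure φ hφ, inferInstance⟩, Subtype.ext (integralAddHom_clopenMeasure φ hφ)⟩
  exact ⟨Equiv.ofBijective T ⟨hinj, hsurj⟩, fun _ _ => rfl⟩
end

section
/- Let A be a d×d matrix with strictly positive entries. Then the intersection over all n ≥ 1 of A^n(C), where C is the cone of vectors in ℝ^d whose entries are all nonnegative or all nonpositive, is exactly the line spanned by the Perron–Frobenius eigenvector of A (the unique up to scale eigenvector with strictly positive entries). -/
/-!
A maximiser of the Collatz–Wielandt function `x ↦ minᵢ (A x)ᵢ / xᵢ` over `A(Δ)`, `Δ` the standard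
simplex, is a positive eigenvector `v`, with eigenvalue `r > 0`. With `D = diag v`, the matrix
`B = r⁻¹ D⁻¹ A D` is row-stochastic with entries `≥ ε > 0`, so (Dobrushin) it shrinks the
oscillation `maxᵢ yᵢ - minᵢ yᵢ` of every vector by the factor `q = 1 - dε < 1`. As
`Aⁿ⁺¹ u = rⁿ⁺¹ D Bⁿ⁺¹ D⁻¹ u`, the ratio `x / v` of any `x ∈ Aⁿ⁺¹(C)` has oscillation
`O(qⁿ)` relative to its own size, so on the intersection `x / v` is constant. Uniqueness of `v`
follows because this intersection equals the span of every positive eigenvector.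
-/

open Finset

namespace Matrix

section RowStochastic

variable {ι : Type*} [Fintype ι] {B : Matrix ι ι ℝ} {ε : ℝ}

/- Write `B = ε • 𝟙 + (B - ε • 𝟙)` with `𝟙` the all-ones matrix; the second summand is
nonnegative with row sums `1 - card ι * ε`. -/
theorem mulVec_apply_mem_Icc_of_le_of_sum_eq_one (hB : ∀ i k, ε ≤ B i k)
    (hrow : ∀ i, ∑ k, B i k = 1) {y : ι → ℝ} {a b : ℝ} (hy : ∀ k, y k ∈ Set.Icc a b) (i : ι) :
    (B *ᵥ y) i ∈ Set.Icc (ε * ∑ k, y k + (1 - Fintype.card ι * ε) * a)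
      (ε * ∑ k, y k + (1 - Fintype.card ι * ε) * b) := by
  have hsplit : (B *ᵥ y) i = ε * ∑ k, y k + ∑ k, (B i k - ε) * y k := by
    simp only [mulVec, dotProduct, sub_mul, sum_sub_distrib, mul_sum]
    ring
  have hsum : ∑ k, (B i k - ε) = 1 - Fintype.card ι * ε := by
    simp [sum_sub_distrib, hrow i]
  rw [hsplit, ← hsum, sum_mul, sum_mul]
  exact ⟨by gcongr with k; exacts [sub_nonneg.2 (hB i k), (hy k).1],
    by gcongr with k; exacts [sub_nonneg.2 (hB i k), (hy k).2]⟩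

theorem exists_pow_mulVec_apply_mem_Icc [DecidableEq ι] (hε : 0 ≤ ε) (hB : ∀ i k, ε ≤ B i k)
    (hrow : ∀ i, ∑ k, B i k = 1) {y : ι → ℝ} {a b : ℝ} (hy : ∀ k, y k ∈ Set.Icc a b) (n : ℕ) :
    ∃ a' b', a ≤ a' ∧ b' - a' = (1 - Fintype.card ι * ε) ^ n * (b - a) ∧
      ∀ i, ((B ^ n) *ᵥ y) i ∈ Set.Icc a' b' := by
  induction n with
  | zero => exact ⟨a, b, le_rfl, by simp, by simpa using hy⟩
  | succ n ih =>
    obtain ⟨a', b', ha', hwidth, hmem⟩ := ih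
    set z := (B ^ n) *ᵥ y
    have hsum : Fintype.card ι * a' ≤ ∑ k, z k := by
      simpa using sum_le_sum fun k (_ : k ∈ univ) => (hmem k).1
    refine ⟨ε * ∑ k, z k + (1 - Fintype.card ι * ε) * a',
      ε * ∑ k, z k + (1 - Fintype.card ι * ε) * b',
      by linarith [mul_le_mul_of_nonneg_left hsum hε],
      by rw [pow_succ', mul_assoc, ← hwidth]; ring, ?_⟩
    rw [pow_succ', ← mulVec_mulVec]
    exact mulVec_apply_mem_Icc_of_le_of_sum_eq_one hB hrow hmem

theorem one_sub_card_mul_nonneg_of_le_of_sum_eq_one [Nonempty ι] (hB : ∀ i k, ε ≤ B i k)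
    (hrow : ∀ i, ∑ k, B i k = 1) : 0 ≤ 1 - Fintype.card ι * ε := by
  inhabit ι
  have := sum_le_sum fun k (_ : k ∈ univ) => hB default k
  simp only [sum_const, card_univ, nsmul_eq_mul, hrow default] at this
  linarith

theorem abs_pow_succ_mulVec_sub_le_of_nonneg [DecidableEq ι] (hε : 0 < ε)
    (hB : ∀ i k, ε ≤ B i k) (hrow : ∀ i, ∑ k, B i k = 1) {w : ι → ℝ} (hw : ∀ k, 0 ≤ w k)
    (n : ℕ) (i j : ι) :
    |((B ^ (n + 1)) *ᵥ w) i - ((B ^ (n + 1)) *ᵥ w) j|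
      ≤ (1 - Fintype.card ι * ε) ^ (n + 1) / ε * ((B ^ (n + 1)) *ᵥ w) j := by
  set S := ∑ k, w k
  have hBw := mulVec_apply_mem_Icc_of_le_of_sum_eq_one hB hrow (a := 0) (b := S)
    (fun k => ⟨hw k, single_le_sum (fun k _ => hw k) (mem_univ k)⟩)
  obtain ⟨a', b', ha', hwidth, hmem⟩ :=
    exists_pow_mulVec_apply_mem_Icc hε.le hB hrow hBw n
  rw [pow_succ, ← mulVec_mulVec]
  calc _ ≤ b' - a' := abs_sub_le_of_le_of_le (hmem i).1 (hmem i).2 (hmem j).1 (hmem j).2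
    _ = (1 - Fintype.card ι * ε) ^ (n + 1) * S := by rw [hwidth]; ring
    _ = (1 - Fintype.card ι * ε) ^ (n + 1) / ε * (ε * S) := by field_simp
    _ ≤ _ := by
      have : Nonempty ι := ⟨i⟩
      have := one_sub_card_mul_nonneg_of_le_of_sum_eq_one hB hrow
      gcongr
      linarith [(hmem j).1]

theorem abs_pow_succ_mulVec_sub_le [DecidableEq ι] (hε : 0 < ε)
    (hB : ∀ i k, ε ≤ B i k) (hrow : ∀ i, ∑ k, B i k = 1) {w : ι → ℝ}
    (hw : (∀ k, 0 ≤ w k) ∨ ∀ k, w k ≤ 0) (n : ℕ) (i j : ι) :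
    |((B ^ (n + 1)) *ᵥ w) i - ((B ^ (n + 1)) *ᵥ w) j|
      ≤ (1 - Fintype.card ι * ε) ^ (n + 1) / ε * |((B ^ (n + 1)) *ᵥ w) j| := by
  have : Nonempty ι := ⟨i⟩
  have hq := one_sub_card_mul_nonneg_of_le_of_sum_eq_one hB hrow
  rcases hw with hw | hw
  · exact (abs_pow_succ_mulVec_sub_le_of_nonneg hε hB hrow hw n i j).trans
      (by gcongr; exact le_abs_self _)
  · have h := abs_pow_succ_mulVec_sub_le_of_nonneg hε hB hrow (w := -w)
      (fun k => neg_nonneg.2 (hw k)) n i j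
    simp only [mulVec_neg, Pi.neg_apply, neg_sub_neg, abs_sub_comm] at h
    exact h.trans (by gcongr; exact neg_le_abs _)

theorem apply_eq_of_forall_eq_smul_pow_mulVec [DecidableEq ι] (hε : 0 < ε)
    (hB : ∀ i k, ε ≤ B i k) (hrow : ∀ i, ∑ k, B i k = 1) {y : ι → ℝ}
    (hy : ∀ n : ℕ, ∃ w : ι → ℝ, ((∀ k, 0 ≤ w k) ∨ ∀ k, w k ≤ 0) ∧
      ∃ c : ℝ, 0 < c ∧ y = c • ((B ^ (n + 1)) *ᵥ w)) (i j : ι) :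
    y i = y j := by
  have : Nonempty ι := ⟨i⟩
  set q := 1 - Fintype.card ι * ε
  have hq : 0 ≤ q := one_sub_card_mul_nonneg_of_le_of_sum_eq_one hB hrow
  have hq1 : q < 1 := by
    have : (0 : ℝ) < Fintype.card ι := by exact_mod_cast Fintype.card_pos
    exact sub_lt_self _ (mul_pos this hε)
  have hbound (n : ℕ) : |y i - y j| ≤ q ^ (n + 1) / ε * |y j| := by
    obtain ⟨w, hw, c, hc, rfl⟩ := hy n
    simp only [Pi.smul_apply, smul_eq_mul, ← mul_sub, abs_mul, abs_of_pos hc]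
    rw [mul_left_comm]
    exact mul_le_mul_of_nonneg_left (abs_pow_succ_mulVec_sub_le hε hB hrow hw n i j) hc.le
  have hlim : Filter.Tendsto (fun n : ℕ => q ^ (n + 1) / ε * |y j|) Filter.atTop (nhds 0) := by
    simpa using (((tendsto_pow_atTop_nhds_zero_of_lt_one hq hq1).comp
      (Filter.tendsto_add_atTop_nat 1)).div_const ε).mul_const |y j|
  exact sub_eq_zero.1 (abs_nonpos_iff.1 (ge_of_tendsto' hlim hbound))

end RowStochastic

section Positive

variable {ι : Type*} {A : Matrix ι ι ℝ} {v : ι → ℝ} {r : ℝ}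

/-- The Doob `h`-transform `r⁻¹ D⁻¹ A D` of `A`, where `D = diag v`. -/
noncomputable def hTransform (A : Matrix ι ι ℝ) (v : ι → ℝ) (r : ℝ) : Matrix ι ι ℝ :=
  of fun i k => A i k * v k / (r * v i)

theorem hTransform_pos (hA : ∀ i j, 0 < A i j) (hv : ∀ i, 0 < v i) (hr : 0 < r) (i k : ι) :
    0 < hTransform A v r i k :=
  div_pos (mul_pos (hA i k) (hv k)) (mul_pos hr (hv i))

variable [Fintype ι]

theorem mulVec_apply_pos_of_nonneg_of_ne_zero (hA : ∀ i j, 0 < A i j) {u : ι → ℝ}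
    (hu : 0 ≤ u) (hu0 : u ≠ 0) (i : ι) : 0 < (A *ᵥ u) i := by
  obtain ⟨k, hk⟩ := Function.ne_iff.1 hu0
  exact sum_pos' (fun j _ => mul_nonneg (hA i j).le (hu j))
    ⟨k, mem_univ k, mul_pos (hA i k) (lt_of_le_of_ne (hu k) (Ne.symm hk))⟩

theorem pos_of_mulVec_eq_smul [Nonempty ι] (hA : ∀ i j, 0 < A i j) (hv : ∀ i, 0 < v i)
    (hAv : A *ᵥ v = r • v) : 0 < r := by
  inhabit ι
  have h := mulVec_apply_pos_of_nonneg_of_ne_zero hA (fun i => (hv i).le)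
    (Function.ne_iff.2 ⟨default, (hv default).ne'⟩) default
  rw [hAv, Pi.smul_apply, smul_eq_mul] at h
  exact pos_of_mul_pos_left h (hv default).le

theorem pow_mulVec_of_mulVec_eq_smul [DecidableEq ι] (hAv : A *ᵥ v = r • v) (n : ℕ) :
    (A ^ n) *ᵥ v = r ^ n • v := by
  induction n with
  | zero => simp
  | succ n ih => rw [pow_succ', ← mulVec_mulVec, ih, mulVec_smul, hAv, smul_smul, pow_succ]

theorem sum_hTransform (hv : ∀ i, 0 < v i) (hr : 0 < r) (hAv : A *ᵥ v = r • v) (i : ι) :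
    ∑ k, hTransform A v r i k = 1 := by
  have h := congrFun hAv i
  simp only [mulVec, dotProduct, Pi.smul_apply, smul_eq_mul] at h
  simp only [hTransform, of_apply, ← sum_div, h]
  exact div_self (mul_pos hr (hv i)).ne'

theorem hTransform_pow_mulVec_div [DecidableEq ι] (hv : ∀ i, 0 < v i) (hr : 0 < r)
    (u : ι → ℝ) (n : ℕ) :
    (hTransform A v r ^ n) *ᵥ (u / v) = (A ^ n *ᵥ u) / (r ^ n • v) := by
  induction n generalizing u with
  | zero => ext i; simp
  | succ n ih =>
    have hstep : hTransform A v r *ᵥ (u / v) = (r⁻¹ • A *ᵥ u) / v := by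
      ext i
      simp only [hTransform, mulVec, dotProduct, of_apply, Pi.div_apply, Pi.smul_apply,
        smul_eq_mul, mul_sum, sum_div]
      refine sum_congr rfl fun k _ => ?_
      have := (hv i).ne'; have := (hv k).ne'
      field_simp
    rw [pow_succ, ← mulVec_mulVec, hstep, ih, mulVec_smul, mulVec_mulVec, ← pow_succ]
    ext i
    simp only [Pi.div_apply, Pi.smul_apply, smul_eq_mul, pow_succ]
    have := (hv i).ne'; have := hr.ne'
    field_simp

theorem mem_span_of_forall_exists_pow_mulVec_eq [DecidableEq ι] (hA : ∀ i j, 0 < A i j)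
    (hv : ∀ i, 0 < v i) (hAv : A *ᵥ v = r • v) {x : ι → ℝ}
    (hx : ∀ n : ℕ, ∃ u : ι → ℝ, ((∀ k, 0 ≤ u k) ∨ ∀ k, u k ≤ 0) ∧ (A ^ (n + 1)) *ᵥ u = x) :
    x ∈ Submodule.span ℝ {v} := by
  cases isEmpty_or_nonempty ι
  · simp [Subsingleton.elim x 0]
  have hr := pos_of_mulVec_eq_smul hA hv hAv
  set B := hTransform A v r
  obtain ⟨p, hp⟩ := Finite.exists_min fun p : ι × ι => B p.1 p.2
  have hconst : ∀ i j, (x / v) i = (x / v) j := by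
    refine apply_eq_of_forall_eq_smul_pow_mulVec (hTransform_pos hA hv hr p.1 p.2)
      (fun i k => hp (i, k)) (sum_hTransform hv hr hAv) fun n => ?_
    obtain ⟨u, hu, hux⟩ := hx n
    refine ⟨u / v, ?_, r ^ (n + 1), pow_pos hr _, ?_⟩
    · exact hu.imp (fun h k => div_nonneg (h k) (hv k).le)
        (fun h k => div_nonpos_of_nonpos_of_nonneg (h k) (hv k).le)
    · rw [hTransform_pow_mulVec_div hv hr, hux]
      ext i
      have := (hv i).ne'; have := hr.ne'
      simp only [Pi.div_apply, Pi.smul_apply, smul_eq_mul]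
      field_simp
  inhabit ι
  refine Submodule.mem_span_singleton.2 ⟨x default / v default, funext fun i => ?_⟩
  have := hconst i default
  simp only [Pi.div_apply] at this
  rw [Pi.smul_apply, smul_eq_mul, ← this, div_mul_cancel₀ _ (hv i).ne']

theorem iInter_image_pow_mulVec_eq_span [DecidableEq ι] [Nonempty ι] (hA : ∀ i j, 0 < A i j)
    (hv : ∀ i, 0 < v i) (hAv : A *ᵥ v = r • v) :
    ⋂ n : ℕ, (fun w => (A ^ (n + 1)) *ᵥ w) '' {w : ι → ℝ | (∀ i, 0 ≤ w i) ∨ (∀ i, w i ≤ 0)}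
      = ↑(Submodule.span ℝ {v}) := by
  ext x
  simp only [Set.mem_iInter, Set.mem_image, Set.mem_ofPred_eq, SetLike.mem_coe]
  refine ⟨mem_span_of_forall_exists_pow_mulVec_eq hA hv hAv, fun hx n => ?_⟩
  obtain ⟨t, rfl⟩ := Submodule.mem_span_singleton.1 hx
  have hr := pos_of_mulVec_eq_smul hA hv hAv
  refine ⟨(t / r ^ (n + 1)) • v, ?_, ?_⟩
  · rcases le_total 0 t with ht | ht
    · exact .inl fun i => smul_nonneg (div_nonneg ht (pow_pos hr _).le) (hv i).le
    · exact .inr fun i => smul_nonpos_of_nonpos_of_nonneg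
        (div_nonpos_of_nonpos_of_nonneg ht (pow_pos hr _).le) (hv i).le
  · rw [mulVec_smul, pow_mulVec_of_mulVec_eq_smul hAv, smul_smul,
      div_mul_cancel₀ _ (pow_pos hr _).ne']

theorem exists_pos_eq_smul_of_mulVec_eq_smul [DecidableEq ι] [Nonempty ι]
    (hA : ∀ i j, 0 < A i j) (hv : ∀ i, 0 < v i) (hAv : A *ᵥ v = r • v) {w : ι → ℝ} {μ : ℝ}
    (hw : ∀ i, 0 < w i) (hAw : A *ᵥ w = μ • w) : ∃ c : ℝ, 0 < c ∧ w = c • v := by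
  have hwv : w ∈ Submodule.span ℝ {v} := by
    rw [← SetLike.mem_coe, ← iInter_image_pow_mulVec_eq_span hA hv hAv,
      iInter_image_pow_mulVec_eq_span hA hw hAw]
    exact Submodule.mem_span_singleton_self w
  obtain ⟨c, rfl⟩ := Submodule.mem_span_singleton.1 hwv
  inhabit ι
  exact ⟨c, pos_of_mul_pos_left (hw default) (hv default).le, rfl⟩

section CollatzWielandt

variable [Nonempty ι]

noncomputable def collatzWielandt (A : Matrix ι ι ℝ) (x : ι → ℝ) : ℝ :=
  univ.inf' univ_nonempty fun i => (A *ᵥ x) i / x i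

theorem collatzWielandt_smul {c : ℝ} (hc : c ≠ 0) (x : ι → ℝ) :
    collatzWielandt A (c • x) = collatzWielandt A x := by
  simp only [collatzWielandt, mulVec_smul, Pi.smul_apply, smul_eq_mul, mul_div_mul_left _ _ hc]

theorem collatzWielandt_mul_le {x : ι → ℝ} {i : ι} (hx : 0 < x i) :
    collatzWielandt A x * x i ≤ (A *ᵥ x) i :=
  (le_div_iff₀ hx).1 (inf'_le _ (mem_univ i))

theorem lt_collatzWielandt {x : ι → ℝ} {t : ℝ} (hx : ∀ i, 0 < x i)
    (h : ∀ i, t * x i < (A *ᵥ x) i) : t < collatzWielandt A x :=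
  (lt_inf'_iff _).2 fun i _ => (lt_div_iff₀ (hx i)).2 (h i)

theorem exists_pos_mulVec_eq_smul (hA : ∀ i j, 0 < A i j) :
    ∃ v : ι → ℝ, (∀ i, 0 < v i) ∧ ∃ r : ℝ, A *ᵥ v = r • v := by
  have hpos {u : ι → ℝ} (hu : 0 ≤ u) (hu0 : u ≠ 0) : ∀ i, 0 < (A *ᵥ u) i :=
    mulVec_apply_pos_of_nonneg_of_ne_zero hA hu hu0
  have hsimplex {p : ι → ℝ} (hp : p ∈ stdSimplex ℝ ι) : ∀ i, 0 < (A *ᵥ p) i :=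
    hpos hp.1 fun h => by simpa [h] using hp.2
  have hcont : ContinuousOn (fun p => collatzWielandt A (A *ᵥ p)) (stdSimplex ℝ ι) :=
    ContinuousOn.finset_inf'_apply _ fun i _ =>
      ContinuousOn.div (by fun_prop) (by fun_prop) fun p hp => (hsimplex hp i).ne'
  classical
  obtain ⟨p, hp, hmax⟩ := (isCompact_stdSimplex ℝ ι).exists_isMaxOn
    ⟨_, single_mem_stdSimplex ℝ (Classical.arbitrary ι)⟩ hcont
  set x := A *ᵥ p
  have hx : ∀ i, 0 < x i := hsimplex hp
  set r := collatzWielandt A x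
  refine ⟨x, hx, r, ?_⟩
  by_contra hne
  -- `A` maps the nonzero vector `A x - r x ≥ 0` to a strictly positive one
  have hAx : ∀ i, r * (A *ᵥ x) i < (A *ᵥ (A *ᵥ x)) i := by
    have h := hpos (u := A *ᵥ x - r • x)
      (fun i => by simpa using collatzWielandt_mul_le (A := A) (hx i)) (sub_ne_zero.2 hne)
    simpa [mulVec_sub, mulVec_smul, sub_pos] using h
  have hsum : 0 < ∑ i, x i := sum_pos (fun i _ => hx i) univ_nonempty
  have hx' : (∑ i, x i)⁻¹ • x ∈ stdSimplex ℝ ι :=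
    ⟨fun i => smul_nonneg (inv_nonneg.2 hsum.le) (hx i).le, by
      simp [← mul_sum, inv_mul_cancel₀ hsum.ne']⟩
  have : collatzWielandt A (A *ᵥ ((∑ i, x i)⁻¹ • x)) ≤ r := hmax hx'
  rw [mulVec_smul, collatzWielandt_smul (inv_ne_zero hsum.ne')] at this
  exact this.not_gt (lt_collatzWielandt (hpos (fun i => (hx i).le) (Function.ne_iff.2
    ⟨Classical.arbitrary ι, (hx _).ne'⟩)) hAx)

end CollatzWielandt

end Positive

end Matrix

/-- For a strictly positive `d × d` matrix `A`, the intersection over `n ≥ 1`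
of the images `Aⁿ(C)` of the positive-and-negative cone `C` is exactly the line spanned by
the Perron–Frobenius eigenvector of `A` (the unique up to scale eigenvector with strictly
positive entries). -/
theorem stmt3 (d : ℕ) (hd : 1 ≤ d) (A : Matrix (Fin d) (Fin d) ℝ)
    (hA : ∀ i j, 0 < A i j) :
    ∃ v : Fin d → ℝ, (∀ i, 0 < v i) ∧ (∃ μ : ℝ, A.mulVec v = μ • v) ∧
      (∀ w : Fin d → ℝ, (∀ i, 0 < w i) → (∃ μ : ℝ, A.mulVec w = μ • w) →
        ∃ c : ℝ, 0 < c ∧ w = c • v) ∧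
      (⋂ n : ℕ, (fun w => (A ^ (n + 1)).mulVec w) ''
          {w : Fin d → ℝ | (∀ i, 0 ≤ w i) ∨ (∀ i, w i ≤ 0)})
        = ↑(Submodule.span ℝ {v}) := by
  have : Nonempty (Fin d) := ⟨⟨0, hd⟩⟩
  obtain ⟨v, hv, r, hAv⟩ := Matrix.exists_pos_mulVec_eq_smul hA
  exact ⟨v, hv, ⟨r, hAv⟩,
    fun w hw ⟨_, hAw⟩ => Matrix.exists_pos_eq_smul_of_mulVec_eq_smul hA hv hAv hw hAw,
    Matrix.iInter_image_pow_mulVec_eq_span hA hv hAv⟩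
end

section
/- Let N = (n_0, n_1, …) be a sequence of positive integers, let α = [n_0; n_1, n_2, …] be the value of the infinite continued fraction, and let M_k = [[n_k, 1],[1, 0]]. Then the intersection over all k of the images (M_0 M_1 ⋯ M_k)(C), where C ⊂ ℝ² is the set of vectors with both entries of the same sign, equals the line spanned by (α, 1). -/
/-!
The product `M_0 ⋯ M_k` is `[[p_k, p_{k-1}], [q_k, q_{k-1}]]`, of determinant `±1`, and a vector
lies in the cone `C` iff the product of its coordinates is nonnegative. Inverting the product
therefore shows that `v` lies in `(M_0 ⋯ M_k)(C)` iff `q_{k-1} v₀ - p_{k-1} v₁` and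
`q_k v₀ - p_k v₁` have opposite signs. The errors `p_k - q_k α` alternate in sign (the even
convergents increase to `α`, the odd ones decrease to it), so every multiple of `(α, 1)` passes
this test for all `k`. Conversely, after division by `q_k` the test says that
`(p_k / q_k) v₁ - v₀` alternates in sign, so its limit `α v₁ - v₀` vanishes.
-/

open Filter

/-- Continued fraction convergent numerators (shifted indexing: `cfP a (k+2) = p_k`). -/
def cfP (a : ℕ → ℤ) : ℕ → ℤ
  | 0 => 0
  | 1 => 1
  | (k + 2) => a k * cfP a (k + 1) + cfP a k

/-- Continued fraction convergent denominators (shifted indexing: `cfQ a (k+2) = q_k`). -/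
def cfQ (a : ℕ → ℤ) : ℕ → ℤ
  | 0 => 1
  | 1 => 0
  | (k + 2) => a k * cfQ a (k + 1) + cfQ a k

theorem sq_neg_one_pow {R : Type*} [Monoid R] [HasDistribNeg R] (k : ℕ) :
    ((-1 : R) ^ k) ^ 2 = 1 := by
  rw [← pow_mul, pow_mul', neg_one_sq, one_pow]

section ContinuedFraction

variable (n : ℕ → ℤ)

theorem cfQ_nonneg (hn : ∀ i, 0 ≤ n i) : ∀ k, 0 ≤ cfQ n k
  | 0 => zero_le_one
  | 1 => le_rfl
  | k + 2 => by
    have := cfQ_nonneg hn k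
    have := cfQ_nonneg hn (k + 1)
    have := hn k
    rw [cfQ]
    positivity

theorem cfQ_pos (hn : ∀ i, 0 < n i) (k : ℕ) : 0 < cfQ n (k + 2) := by
  induction k with
  | zero => simp [cfQ]
  | succ k ih =>
    have := cfQ_nonneg n (fun i => (hn i).le) (k + 1)
    have := hn (k + 1)
    rw [cfQ]
    positivity

theorem cfP_succ_mul_cfQ_sub_cfP_mul_cfQ_succ (k : ℕ) :
    cfP n (k + 1) * cfQ n k - cfP n k * cfQ n (k + 1) = (-1) ^ k := by
  induction k with
  | zero => simp [cfP, cfQ]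
  | succ k ih =>
    rw [cfP, cfQ]
    linear_combination -ih

theorem cfP_add_two_mul_cfQ_sub_cfP_mul_cfQ_add_two (k : ℕ) :
    cfP n (k + 2) * cfQ n k - cfP n k * cfQ n (k + 2) = n k * (-1) ^ k := by
  rw [cfP, cfQ]
  linear_combination n k * cfP_succ_mul_cfQ_sub_cfP_mul_cfQ_succ n k

theorem prod_map_range_matrix_eq_cfP_cfQ (k : ℕ) :
    ((List.range (k + 1)).map (fun i => !![(n i : ℝ), 1; 1, 0])).prod
      = !![(cfP n (k + 2) : ℝ), cfP n (k + 1); cfQ n (k + 2), cfQ n (k + 1)] := by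
  induction k with
  | zero => simp [cfP, cfQ]
  | succ k ih =>
    rw [List.range_succ, List.map_append, List.prod_append, ih]
    simp only [List.map_cons, List.map_nil, List.prod_cons, List.prod_nil, mul_one,
      Matrix.mul_fin_two, cfP, cfQ]
    push_cast
    ext i j
    fin_cases i <;> fin_cases j <;> simp <;> ring

end ContinuedFraction

theorem neg_one_pow_mul_sub_nonneg_of_tendsto {x : ℕ → ℝ} {a : ℝ}
    (hx : Tendsto x atTop (nhds a)) (hstep : ∀ k, 0 ≤ (-1) ^ k * (x (k + 2) - x k)) (k : ℕ) :
    0 ≤ (-1) ^ k * (a - x k) := by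
  set y : ℕ → ℝ := fun m => (-1) ^ k * x (k + 2 * m)
  have hy : Monotone y := monotone_nat_of_le_succ fun m => by
    have := hstep (k + 2 * m)
    rw [pow_add, pow_mul, neg_one_sq, one_pow, mul_one] at this
    simp only [y, show k + 2 * (m + 1) = k + 2 * m + 2 by ring]
    linarith
  have hlim : Tendsto y atTop (nhds ((-1) ^ k * a)) :=
    (hx.comp (tendsto_atTop_atTop.mpr fun b => ⟨b, fun m hm => by omega⟩)).const_mul _
  have := hy.ge_of_tendsto hlim 0
  simp only [y, mul_zero, add_zero] at this
  linarith

theorem same_sign_iff_mul_nonneg (u : Fin 2 → ℝ) :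
    ((∀ i, 0 ≤ u i) ∨ (∀ i, u i ≤ 0)) ↔ 0 ≤ u 0 * u 1 := by
  constructor
  · rintro (h | h)
    · exact mul_nonneg (h 0) (h 1)
    · exact mul_nonneg_of_nonpos_of_nonpos (h 0) (h 1)
  · intro h
    rcases mul_nonneg_iff.mp h with ⟨h0, h1⟩ | ⟨h0, h1⟩
    · left; intro i; fin_cases i <;> assumption
    · right; intro i; fin_cases i <;> assumption

theorem mem_image_mulVec_iff {a b c d : ℝ} (hdet : a * d - b * c ≠ 0) (v : Fin 2 → ℝ) :
    v ∈ (fun u => !![a, b; c, d].mulVec u) '' {u | 0 ≤ u 0 * u 1}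
      ↔ 0 ≤ (d * v 0 - b * v 1) * (a * v 1 - c * v 0) := by
  constructor
  · rintro ⟨u, hu, rfl⟩
    have key : (d * (a * u 0 + b * u 1) - b * (c * u 0 + d * u 1))
        * (a * (c * u 0 + d * u 1) - c * (a * u 0 + b * u 1))
        = (a * d - b * c) ^ 2 * (u 0 * u 1) := by ring
    simpa [Matrix.mulVec, dotProduct, Fin.sum_univ_two, key]
      using mul_nonneg (sq_nonneg (a * d - b * c)) hu
  · intro h
    set D := a * d - b * c
    refine ⟨![(d * v 0 - b * v 1) / D, (a * v 1 - c * v 0) / D], ?_, ?_⟩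
    · simpa [div_mul_div_comm, ← sq] using div_nonneg h (sq_nonneg D)
    · ext i
      fin_cases i <;> simp [Matrix.mulVec, dotProduct, Fin.sum_univ_two] <;> field_simp <;> ring

theorem eq_zero_of_tendsto_of_mul_succ_nonpos {f : ℕ → ℝ} {L : ℝ}
    (hf : Tendsto f atTop (nhds L)) (h : ∀ k, f k * f (k + 1) ≤ 0) : L = 0 := by
  have hL : L * L ≤ 0 :=
    le_of_tendsto' (hf.mul (hf.comp (tendsto_add_atTop_nat 1))) h
  exact mul_self_eq_zero.mp (le_antisymm hL (mul_self_nonneg L))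

theorem neg_one_pow_mul_convergent_sub_nonneg {n : ℕ → ℤ} (hn : ∀ i, 0 < n i) (k : ℕ) :
    0 ≤ (-1) ^ k * ((cfP n (k + 2 + 2) : ℝ) / cfQ n (k + 2 + 2)
      - (cfP n (k + 2) : ℝ) / cfQ n (k + 2)) := by
  have hQ : (0 : ℝ) < cfQ n (k + 2) := by exact_mod_cast cfQ_pos n hn k
  have hQ' : (0 : ℝ) < cfQ n (k + 2 + 2) := by exact_mod_cast cfQ_pos n hn (k + 2)
  have hE : (cfP n (k + 2 + 2) : ℝ) * cfQ n (k + 2) - cfP n (k + 2) * cfQ n (k + 2 + 2)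
      = n (k + 2) * (-1) ^ k := by
    have h := cfP_add_two_mul_cfQ_sub_cfP_mul_cfQ_add_two n (k + 2)
    rw [pow_add, neg_one_sq, mul_one] at h
    exact_mod_cast h
  have key : (-1) ^ k * ((cfP n (k + 2 + 2) : ℝ) / cfQ n (k + 2 + 2)
      - (cfP n (k + 2) : ℝ) / cfQ n (k + 2))
      = n (k + 2) / (cfQ n (k + 2 + 2) * cfQ n (k + 2)) := by
    field_simp
    linear_combination (-1) ^ k * hE + n (k + 2) * sq_neg_one_pow (R := ℝ) k
  have := hn (k + 2)
  rw [key]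
  positivity

theorem neg_one_pow_mul_cfP_sub_cfQ_mul_nonneg {n : ℕ → ℤ} (hn : ∀ i, 0 < n i) {α : ℝ}
    (hα : Tendsto (fun k => (cfP n (k + 2) : ℝ) / cfQ n (k + 2)) atTop (nhds α)) (k : ℕ) :
    0 ≤ (-1) ^ k * (cfP n (k + 1) - cfQ n (k + 1) * α) := by
  cases k with
  | zero => simp [cfP, cfQ]
  | succ k =>
    have hQ : (0 : ℝ) < cfQ n (k + 2) := by exact_mod_cast cfQ_pos n hn k
    have hsign := neg_one_pow_mul_sub_nonneg_of_tendsto hα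
      (neg_one_pow_mul_convergent_sub_nonneg hn) k
    have e : (-1) ^ (k + 1) * (cfP n (k + 1 + 1) - cfQ n (k + 1 + 1) * α)
        = (cfQ n (k + 2) : ℝ) * ((-1) ^ k * (α - cfP n (k + 2) / cfQ n (k + 2))) := by
      field_simp
      ring
    rw [e]
    exact mul_nonneg hQ.le hsign

theorem cfP_sub_cfQ_mul_mul_cfP_sub_cfQ_mul_nonpos {n : ℕ → ℤ} (hn : ∀ i, 0 < n i)
    {α : ℝ} (hα : Tendsto (fun k => (cfP n (k + 2) : ℝ) / cfQ n (k + 2)) atTop (nhds α))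
    (k : ℕ) :
    (cfP n (k + 1) - cfQ n (k + 1) * α) * (cfP n (k + 2) - cfQ n (k + 2) * α) ≤ 0 := by
  have h₁ := neg_one_pow_mul_cfP_sub_cfQ_mul_nonneg hn hα k
  have h₂ := neg_one_pow_mul_cfP_sub_cfQ_mul_nonneg hn hα (k + 1)
  rw [pow_succ] at h₂
  linear_combination mul_nonneg h₁ h₂ - ((cfP n (k + 1) - cfQ n (k + 1) * α)
    * (cfP n (k + 2) - cfQ n (k + 2) * α)) * sq_neg_one_pow (R := ℝ) k

theorem eq_mul_of_forall_cfQ_mul_sub_cfP_mul_nonneg {n : ℕ → ℤ} (hn : ∀ i, 0 < n i)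
    {α : ℝ} (hα : Tendsto (fun k => (cfP n (k + 2) : ℝ) / cfQ n (k + 2)) atTop (nhds α))
    {x y : ℝ}
    (h : ∀ k, 0 ≤ (cfQ n (k + 1) * x - cfP n (k + 1) * y)
      * (cfP n (k + 2) * y - cfQ n (k + 2) * x)) :
    x = α * y := by
  suffices α * y - x = 0 by linarith
  refine eq_zero_of_tendsto_of_mul_succ_nonpos ((hα.mul_const y).sub_const x) fun k => ?_
  have hQ : (0 : ℝ) < cfQ n (k + 2) := by exact_mod_cast cfQ_pos n hn k
  have hQ' : (0 : ℝ) < cfQ n (k + 1 + 2) := by exact_mod_cast cfQ_pos n hn (k + 1)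
  have e : ((cfP n (k + 2) : ℝ) / cfQ n (k + 2) * y - x)
      * ((cfP n (k + 1 + 2) : ℝ) / cfQ n (k + 1 + 2) * y - x)
      = -((cfQ n (k + 1 + 1) * x - cfP n (k + 1 + 1) * y)
        * (cfP n (k + 1 + 2) * y - cfQ n (k + 1 + 2) * x))
        / (cfQ n (k + 2) * cfQ n (k + 1 + 2)) := by
    field_simp
    ring
  rw [e]
  exact div_nonpos_of_nonpos_of_nonneg (neg_nonpos.mpr (h (k + 1))) (by positivity)

/-- For a sequence `N = (n_0, n_1, …)` of positive integers with continued
fraction value `α = [n_0; n_1, n_2, …]` and `M_k = [[n_k, 1], [1, 0]]`, the intersection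
over `k` of the images `(M_0 ⋯ M_k)(C)` of the positive-and-negative cone `C ⊆ ℝ²`
is the line spanned by `(α, 1)`. -/
theorem stmt5 (n : ℕ → ℤ) (hn : ∀ i, 0 < n i) (α : ℝ)
    (hα : Tendsto (fun k => (cfP n (k + 2) : ℝ) / (cfQ n (k + 2) : ℝ)) atTop (nhds α)) :
    (⋂ k : ℕ, (fun v => (((List.range (k + 1)).map
          (fun i => !![(n i : ℝ), 1; 1, 0])).prod).mulVec v) ''
        {v : Fin 2 → ℝ | (∀ i, 0 ≤ v i) ∨ (∀ i, v i ≤ 0)})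
      = ↑(Submodule.span ℝ {![α, 1]}) := by
  have hcone : {u : Fin 2 → ℝ | (∀ i, 0 ≤ u i) ∨ (∀ i, u i ≤ 0)}
      = {u | 0 ≤ u 0 * u 1} := Set.ext same_sign_iff_mul_nonneg
  have hdet (k : ℕ) :
      (cfP n (k + 2) : ℝ) * cfQ n (k + 1) - cfP n (k + 1) * cfQ n (k + 2) ≠ 0 := by
    exact_mod_cast (cfP_succ_mul_cfQ_sub_cfP_mul_cfQ_succ n (k + 1)).trans_ne
      (pow_ne_zero _ (by norm_num))
  ext v
  simp only [hcone, prod_map_range_matrix_eq_cfP_cfQ, Set.mem_iInter, mem_image_mulVec_iff (hdet _),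
    SetLike.mem_coe, Submodule.mem_span_singleton]
  constructor
  · intro h
    have hv := eq_mul_of_forall_cfQ_mul_sub_cfP_mul_nonneg hn hα h
    exact ⟨v 1, by ext i; fin_cases i <;> simp [hv, mul_comm]⟩
  · rintro ⟨c, rfl⟩ k
    have := cfP_sub_cfQ_mul_mul_cfP_sub_cfQ_mul_nonpos hn hα k
    simp only [Pi.smul_apply, Matrix.cons_val_zero, Matrix.cons_val_one, smul_eq_mul]
    linarith [mul_nonneg (sq_nonneg c) (neg_nonneg.mpr this)]
end

section
/- Two irrational real numbers α and β have continued fraction expansions sharing a common tail (i.e., there exist k, ℓ with a_{k+i} = b_{ℓ+i} for all i ≥ 1, where (a_i), (b_i) are their continued fraction coefficient sequences) if and only if there is a matrix [[a, b],[c, d]] ∈ GL(2, ℤ) (integer entries, determinant ±1) with β = (aα + b)/(cα + d). -/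
/-!
The matrices `[[p_n, p_{n-1}], [q_n, q_{n-1}]] = ∏_{i ≤ n} [[a_i, 1], [1, 0]]` have determinant
`±1`, and `α` is the image of its complete quotient `α_{n+1} = [a_{n+1}; a_{n+2}, …]` under the
corresponding Möbius map. Hence a common tail makes `α` and `β` Möbius images of one number
under unimodular matrices, which gives the forward direction.

Conversely, if `β = Mα`, then `β = (M P_k) α_{k+1}` for the convergent matrices `P_k` of `α`.
Since `|q_k α - p_k| ≤ 1` and `q_k → ∞`, the bottom row `(C, D)` of `M P_k` satisfies
`0 < D < C` for large `k` (after replacing `M` by `-M`). The Euclidean algorithm on `(C, D)`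
writes `M P_k` as the matrix of a finite continued fraction `[c_0; …, c_n]`, so `β` has the
expansion `[c_0; …, c_n, a_{k+1}, a_{k+2}, …]`, and the expansion of an irrational number is
unique because its coefficients are successive integer parts.
-/

open Filter

open Matrix Topology

namespace ContinuedFraction

def shift (a : ℕ → ℤ) (m : ℕ) : ℕ → ℤ := fun i => a (m + i)

noncomputable def convergent (a : ℕ → ℤ) (n : ℕ) : ℝ :=
  (cfP a (n + 2) : ℝ) / (cfQ a (n + 2) : ℝ)

/-- `cfMat a (n + 1) = [[p_n, p_{n-1}], [q_n, q_{n-1}]]`. -/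
def cfMat (a : ℕ → ℤ) (n : ℕ) : Matrix (Fin 2) (Fin 2) ℤ :=
  !![cfP a (n + 1), cfP a n; cfQ a (n + 1), cfQ a n]

section cfMat

variable (a : ℕ → ℤ)

theorem cfMat_zero : cfMat a 0 = 1 := by
  ext i j; fin_cases i <;> fin_cases j <;> rfl

theorem cfMat_succ (n : ℕ) : cfMat a (n + 1) = cfMat a n * !![a n, 1; 1, 0] := by
  ext i j; fin_cases i <;> fin_cases j <;> simp [cfMat, cfP, cfQ, mul_comm]

theorem det_cfMat (n : ℕ) : (cfMat a n).det = (-1) ^ n := by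
  induction n with
  | zero => simp [cfMat_zero]
  | succ n ih => rw [cfMat_succ, det_mul, ih, det_fin_two_of, pow_succ]; ring

theorem isUnit_det_cfMat (n : ℕ) : IsUnit (cfMat a n).det := by
  rw [det_cfMat]; exact isUnit_neg_one.pow n

theorem cfMat_add (m n : ℕ) : cfMat a (m + n) = cfMat a m * cfMat (shift a m) n := by
  induction n with
  | zero => simp [cfMat_zero]
  | succ n ih => rw [← add_assoc, cfMat_succ, ih, cfMat_succ, mul_assoc]; rfl

theorem cfMat_congr {a b : ℕ → ℤ} {n : ℕ} (h : ∀ i < n, a i = b i) :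
    cfMat a n = cfMat b n := by
  induction n with
  | zero => simp [cfMat_zero]
  | succ n ih =>
    rw [cfMat_succ, cfMat_succ, ih fun i hi => h i (by omega), h n n.lt_succ_self]

end cfMat

noncomputable def mobius (M : Matrix (Fin 2) (Fin 2) ℤ) (x : ℝ) : ℝ :=
  ((M 0 0 : ℝ) * x + M 0 1) / ((M 1 0 : ℝ) * x + M 1 1)

section mobius

variable {M N : Matrix (Fin 2) (Fin 2) ℤ} {x : ℝ}

theorem mobius_mul (h : (N 1 0 : ℝ) * x + N 1 1 ≠ 0) :
    mobius (M * N) x = mobius M (mobius N x) := by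
  simp only [mobius, mul_apply, Fin.sum_univ_two, Int.cast_add, Int.cast_mul]
  rw [mul_div_assoc', div_add' _ _ _ h, mul_div_assoc', div_add' _ _ _ h,
    div_div_div_cancel_right₀ h]
  congr 1 <;> ring

theorem mobius_smul_one {c : ℤ} (hc : c ≠ 0) (x : ℝ) : mobius (c • 1) x = x := by
  simp only [mobius, Matrix.smul_apply, one_apply_eq, one_apply_ne, Int.zsmul_eq_mul, mul_one,
    mul_zero, ne_eq, zero_ne_one, one_ne_zero, not_false_eq_true, Int.cast_zero, add_zero,
    zero_mul, zero_add]
  field_simp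

theorem mobius_neg (M : Matrix (Fin 2) (Fin 2) ℤ) (x : ℝ) : mobius (-M) x = mobius M x := by
  simp only [mobius, neg_apply, Int.cast_neg, neg_mul, ← neg_add, neg_div_neg_eq]

theorem mobius_denom_ne_zero (hM : M.det ≠ 0) (hx : Irrational x) :
    (M 1 0 : ℝ) * x + M 1 1 ≠ 0 := by
  rcases eq_or_ne (M 1 0) 0 with hc | hc
  · have hd : M 1 1 ≠ 0 := fun hd => hM (by simp [det_fin_two, hc, hd])
    simpa [hc] using hd
  · exact ((hx.intCast_mul hc).add_intCast (M 1 1)).ne_zero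

theorem mobius_adjugate_mobius (hM : M.det ≠ 0) (h : (M 1 0 : ℝ) * x + M 1 1 ≠ 0) :
    mobius M.adjugate (mobius M x) = x := by
  rw [← mobius_mul h, adjugate_mul, mobius_smul_one hM]

theorem mobius_mobius_adjugate (hM : M.det ≠ 0) (hx : Irrational x) :
    mobius M (mobius M.adjugate x) = x := by
  have hadj : M.adjugate.det ≠ 0 := by simpa [det_adjugate] using hM
  rw [← mobius_mul (mobius_denom_ne_zero hadj hx), mul_adjugate, mobius_smul_one hM]

theorem irrational_mobius (hM : M.det ≠ 0) (hx : Irrational x) : Irrational (mobius M x) := by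
  rintro ⟨q, hq⟩
  apply hx
  rw [← mobius_adjugate_mobius hM (mobius_denom_ne_zero hM hx), ← hq]
  set N := M.adjugate
  exact ⟨(N 0 0 * q + N 0 1) / (N 1 0 * q + N 1 1), by push_cast; rfl⟩

theorem continuousAt_mobius (h : (M 1 0 : ℝ) * x + M 1 1 ≠ 0) : ContinuousAt (mobius M) x := by
  unfold mobius
  fun_prop (disch := exact h)

theorem column_ratio_mul (h : N 1 0 ≠ 0) :
    ((M * N) 0 0 : ℝ) / ((M * N) 1 0 : ℝ) = mobius M ((N 0 0 : ℝ) / N 1 0) := by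
  have h' : (N 1 0 : ℝ) ≠ 0 := by exact_mod_cast h
  simp only [mobius, mul_apply, Fin.sum_univ_two, Int.cast_add, Int.cast_mul]
  rw [mul_div_assoc', div_add' _ _ _ h', mul_div_assoc', div_add' _ _ _ h',
    div_div_div_cancel_right₀ h']

end mobius

theorem convergent_eq_cfMat (a : ℕ → ℤ) (n : ℕ) :
    convergent a n = (cfMat a (n + 1) 0 0 : ℝ) / (cfMat a (n + 1) 1 0 : ℝ) := rfl

theorem convergent_add {a : ℕ → ℤ} {m n : ℕ} (h : cfQ (shift a m) (n + 2) ≠ 0) :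
    convergent a (m + n) = mobius (cfMat a m) (convergent (shift a m) n) := by
  rw [convergent_eq_cfMat, add_assoc, cfMat_add, column_ratio_mul h]; rfl

theorem convergent_shift {a : ℕ → ℤ} {m n : ℕ} (h : cfQ a (m + n + 2) ≠ 0) :
    convergent (shift a m) n = mobius (cfMat a m).adjugate (convergent a (m + n)) := by
  have hdet : ((cfMat a m).det : ℝ) ≠ 0 := by exact_mod_cast (isUnit_det_cfMat a m).ne_zero
  have key : (cfMat a m).adjugate * cfMat a (m + n + 1) =
      (cfMat a m).det • cfMat (shift a m) (n + 1) := by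
    rw [add_assoc, cfMat_add, ← mul_assoc, adjugate_mul, smul_mul_assoc, one_mul]
  rw [convergent_eq_cfMat, convergent_eq_cfMat, ← column_ratio_mul h, key]
  simp [mul_div_mul_left _ _ hdet]

section positive

variable {a : ℕ → ℤ} (ha : ∀ i, 1 ≤ i → 0 < a i)
include ha

theorem cfQ_nonneg : ∀ n, 0 ≤ cfQ a n
  | 0 | 1 | 2 => by simp [cfQ]
  | n + 3 => add_nonneg (mul_nonneg (ha (n + 1) (by omega)).le (cfQ_nonneg (n + 2)))
      (cfQ_nonneg (n + 1))

theorem cfQ_add_le (n : ℕ) : cfQ a (n + 1) + cfQ a (n + 2) ≤ cfQ a (n + 3) := by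
  have h1 := ha (n + 1) (by omega)
  have h2 := cfQ_nonneg ha (n + 2)
  show _ ≤ a (n + 1) * cfQ a (n + 2) + cfQ a (n + 1)
  nlinarith

theorem one_le_cfQ : ∀ n, 1 ≤ cfQ a (n + 2)
  | 0 => by simp [cfQ]
  | n + 1 => by linarith [cfQ_add_le ha n, cfQ_nonneg ha (n + 1), one_le_cfQ n]

theorem natCast_le_cfQ : ∀ n : ℕ, (n : ℤ) ≤ cfQ a (n + 2)
  | 0 => cfQ_nonneg ha 2
  | 1 => one_le_cfQ ha 1
  | n + 2 => by
    have h1 : cfQ a (n + 2) + cfQ a (n + 3) ≤ cfQ a (n + 4) := cfQ_add_le ha (n + 1)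
    have h2 : ((n + 1 : ℕ) : ℤ) ≤ cfQ a (n + 3) := natCast_le_cfQ (n + 1)
    push_cast at h2 ⊢
    linarith [one_le_cfQ ha n]

theorem tendsto_cfQ : Tendsto (fun n => (cfQ a (n + 2) : ℝ)) atTop atTop :=
  tendsto_atTop_mono (fun n => by exact_mod_cast natCast_le_cfQ ha n) tendsto_natCast_atTop_atTop

theorem cfQ_ne_zero (n : ℕ) : cfQ a (n + 2) ≠ 0 := by
  have := one_le_cfQ ha n; omega

theorem shift_pos (m : ℕ) : ∀ i, 1 ≤ i → 0 < shift a m i := fun i hi => ha _ (by omega)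

theorem shift_pos_of_one_le {m : ℕ} (hm : 1 ≤ m) : ∀ i, 0 < shift a m i :=
  fun _ => ha _ (by omega)

end positive

section allPositive

variable {u : ℕ → ℤ} (hu : ∀ i, 0 < u i)
include hu

theorem cfQ_le_cfP (n : ℕ) : cfQ u (n + 2) ≤ cfP u (n + 2) := by
  suffices ∀ n, cfQ u (n + 1) ≤ cfP u (n + 1) ∧ cfQ u (n + 2) ≤ cfP u (n + 2) from
    (this n).2
  intro n
  induction n with
  | zero => have := hu 0; simp only [cfP, cfQ]; omega
  | succ n ih =>
    exact ⟨ih.2, add_le_add (mul_le_mul_of_nonneg_left ih.2 (hu _).le) ih.1⟩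

theorem one_le_convergent (n : ℕ) : 1 ≤ convergent u n := by
  have hq : (0 : ℝ) < cfQ u (n + 2) := by exact_mod_cast one_le_cfQ (fun i _ => hu i) n
  rw [convergent, one_le_div hq]
  exact_mod_cast cfQ_le_cfP hu n

theorem one_le_of_tendsto_convergent {x : ℝ} (h : Tendsto (convergent u) atTop (𝓝 x)) :
    1 ≤ x :=
  ge_of_tendsto' h (one_le_convergent hu)

end allPositive

/-- The `m`-th complete quotient `[a_m; a_{m+1}, …]` of `x`, when `a` is the expansion of `x`. -/
noncomputable def completeQuotient (a : ℕ → ℤ) (x : ℝ) (m : ℕ) : ℝ :=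
  mobius (cfMat a m).adjugate x

section completeQuotient

variable {a : ℕ → ℤ} {x : ℝ}

theorem det_adjugate_cfMat_ne_zero (m : ℕ) : (cfMat a m).adjugate.det ≠ 0 := by
  simpa [det_adjugate] using (isUnit_det_cfMat a m).ne_zero

theorem irrational_completeQuotient (hx : Irrational x) (m : ℕ) :
    Irrational (completeQuotient a x m) :=
  irrational_mobius (det_adjugate_cfMat_ne_zero m) hx

theorem mobius_completeQuotient (hx : Irrational x) (m : ℕ) :
    mobius (cfMat a m) (completeQuotient a x m) = x :=
  mobius_mobius_adjugate (isUnit_det_cfMat a m).ne_zero hx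

variable (ha : ∀ i, 1 ≤ i → 0 < a i) (hx : Irrational x)
  (hconv : Tendsto (convergent a) atTop (𝓝 x))
include ha hx hconv

theorem tendsto_convergent_shift (m : ℕ) :
    Tendsto (convergent (shift a m)) atTop (𝓝 (completeQuotient a x m)) := by
  have hlim : Tendsto (fun n => convergent a (m + n)) atTop (𝓝 x) :=
    hconv.comp (by simpa [add_comm] using tendsto_add_atTop_nat m)
  refine ((continuousAt_mobius ?_).tendsto.comp hlim).congr fun n => ?_
  · exact mobius_denom_ne_zero (det_adjugate_cfMat_ne_zero m) hx
  · exact (convergent_shift (cfQ_ne_zero ha (m + n))).symm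

theorem one_lt_completeQuotient {m : ℕ} (hm : 1 ≤ m) : 1 < completeQuotient a x m :=
  lt_of_le_of_ne
    (one_le_of_tendsto_convergent (shift_pos_of_one_le ha hm)
      (tendsto_convergent_shift ha hx hconv m))
    (irrational_completeQuotient hx m).ne_one.symm

theorem abs_mul_cfQ_sub_cfP_le_one (n : ℕ) :
    |x * cfQ a (n + 2) - cfP a (n + 2)| ≤ 1 := by
  have ht := one_lt_completeQuotient ha hx hconv (m := n + 1) (by omega)
  have hx' := mobius_completeQuotient (a := a) hx (n + 1)
  set t := completeQuotient a x (n + 1)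
  have hdet : (cfP a (n + 2) * cfQ a (n + 1) - cfP a (n + 1) * cfQ a (n + 2) : ℝ) =
      (-1) ^ (n + 1) := by
    have := det_cfMat a (n + 1)
    rw [cfMat, det_fin_two_of] at this
    exact_mod_cast this
  have hq : (1 : ℝ) ≤ cfQ a (n + 2) := by exact_mod_cast one_le_cfQ ha n
  have hq' : (0 : ℝ) ≤ cfQ a (n + 1) := by exact_mod_cast cfQ_nonneg ha (n + 1)
  have hden : 1 ≤ (cfQ a (n + 2) : ℝ) * t + cfQ a (n + 1) := by nlinarith
  have key : x * cfQ a (n + 2) - cfP a (n + 2) =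
      -(-1) ^ (n + 1) / ((cfQ a (n + 2) : ℝ) * t + cfQ a (n + 1)) := by
    rw [← hx', ← hdet, mobius]
    simp only [cfMat, of_apply, cons_val', cons_val_zero, cons_val_one, empty_val',
      cons_val_fin_one]
    field_simp
    ring
  rw [key, abs_div, abs_neg, abs_neg_one_pow, abs_of_pos (by linarith)]
  exact div_le_one_of_le₀ hden (by linarith)

theorem floor_eq_coeff_zero : ⌊x⌋ = a 0 := by
  have ht := one_lt_completeQuotient ha hx hconv le_rfl
  have hx' := mobius_completeQuotient (a := a) hx 1
  set t := completeQuotient a x 1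
  have hxt : x = a 0 + t⁻¹ := by
    rw [← hx']
    simp only [mobius, cfMat, cfP, cfQ, of_apply, cons_val', cons_val_zero, cons_val_one,
      cons_val_fin_one, mul_one, mul_zero, add_zero, zero_add, one_mul, Int.cast_one, Int.cast_zero]
    field_simp
  have h0 := inv_pos.2 (zero_lt_one.trans ht)
  have h1 := inv_lt_one_of_one_lt₀ ht
  rw [Int.floor_eq_iff, hxt]
  constructor <;> linarith

end completeQuotient

theorem eq_of_tendsto_convergent {u v : ℕ → ℤ} (hu : ∀ i, 1 ≤ i → 0 < u i)
    (hv : ∀ i, 1 ≤ i → 0 < v i) {x : ℝ} (hx : Irrational x)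
    (hux : Tendsto (convergent u) atTop (𝓝 x))
    (hvx : Tendsto (convergent v) atTop (𝓝 x)) : u = v := by
  funext i
  induction i generalizing u v x with
  | zero => rw [← floor_eq_coeff_zero hu hx hux, floor_eq_coeff_zero hv hx hvx]
  | succ i ih =>
    have h0 : u 0 = v 0 := by rw [← floor_eq_coeff_zero hu hx hux, floor_eq_coeff_zero hv hx hvx]
    have hq : completeQuotient u x 1 = completeQuotient v x 1 := by
      unfold completeQuotient
      rw [cfMat_congr (b := v) fun i hi => by obtain rfl := Nat.lt_one_iff.1 hi; exact h0]
    have := ih (shift_pos hu 1) (shift_pos hv 1) (irrational_completeQuotient hx 1)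
      (tendsto_convergent_shift hu hx hux 1) (hq ▸ tendsto_convergent_shift hv hx hvx 1)
    simpa [shift, add_comm] using this

theorem exists_cfMat_eq (N : Matrix (Fin 2) (Fin 2) ℤ) (hN : IsUnit N.det) (h0 : 0 < N 1 1)
    (h1 : N 1 1 < N 1 0) : ∃ n c, (∀ i, 1 ≤ i → 0 < c i) ∧ cfMat c (n + 1) = N := by
  induction hD : (N 1 1).toNat using Nat.strong_induction_on generalizing N with
  | _ D ih =>
  set x := N 1 0 / N 1 1 with hx
  have hx1 : 1 ≤ x := (Int.le_ediv_iff_mul_le h0).2 (by linarith)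
  -- Euclid's algorithm on the bottom row `(C, D)`: `N = N' * [[x, 1], [1, 0]]` where `N'` has
  -- bottom row `(D, C % D)`.
  rcases eq_or_ne (N 1 1) 1 with hd | hd
  · -- `det N` fixes the parity of the length: `N` belongs to `[B; x]` or to `[B - 1; 1, x - 1]`.
    rw [det_fin_two, hd, mul_one, Int.isUnit_iff] at hN
    rcases hN with hN | hN
    · have hA : N 0 0 = N 0 1 * N 1 0 + 1 := by linarith
      refine ⟨1, fun i => if i = 0 then N 0 1 else N 1 0, fun i hi => ?_, ?_⟩
      · simp only [if_neg (show i ≠ 0 by omega)]; omega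
      · ext i j; fin_cases i <;> fin_cases j <;> simp [cfMat, cfP, cfQ, hd, hA, mul_comm]
    · refine ⟨2, fun i => if i = 0 then N 0 1 - 1 else if i = 1 then 1 else N 1 0 - 1,
        fun i hi => ?_, ?_⟩
      · simp only [if_neg (show i ≠ 0 by omega)]; split_ifs <;> omega
      · have hA : N 0 0 = N 0 1 * N 1 0 - 1 := by linarith
        ext i j; fin_cases i <;> fin_cases j <;> simp [cfMat, cfP, cfQ, hd, hA]
        ring
  · set N' := N * !![0, 1; 1, -x]
    have hsplit : N = N' * !![x, 1; 1, 0] := by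
      rw [mul_assoc, show !![(0 : ℤ), 1; 1, -x] * !![x, 1; 1, 0] = 1 by simp [one_fin_two],
        mul_one]
    have hN'10 : N' 1 0 = N 1 1 := by simp [N', mul_apply]
    have hN'11 : N' 1 1 = N 1 0 % N 1 1 := by
      simp only [N', hx, mul_apply, of_apply, cons_val', cons_val_zero, cons_val_one,
        cons_val_fin_one, Fin.sum_univ_two, mul_one, mul_neg, Int.emod_def]
      ring
    have hr : 0 < N' 1 1 := by
      rw [hN'11]
      refine lt_of_le_of_ne (Int.emod_nonneg _ h0.ne') fun hr => hd ?_
      have hdvd : N 1 1 ∣ N.det := by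
        rw [det_fin_two]
        exact dvd_sub (dvd_mul_left _ _) (dvd_mul_of_dvd_right (Int.dvd_of_emod_eq_zero hr.symm) _)
      exact Int.eq_one_of_dvd_one h0.le (hdvd.trans hN.dvd)
    have hN' : IsUnit N'.det := by
      simpa [N', det_mul, det_fin_two_of] using hN
    have hlt : N' 1 1 < N' 1 0 := by rw [hN'10, hN'11]; exact Int.emod_lt_of_pos _ h0
    obtain ⟨n, c, hc, hcN⟩ := ih _ (by omega) N' hN' hr hlt rfl
    refine ⟨n + 1, Function.update c (n + 1) x, fun i hi => ?_, ?_⟩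
    · rcases eq_or_ne i (n + 1) with rfl | hi'
      · simp only [Function.update_self]; omega
      · simpa [Function.update_of_ne hi'] using hc i hi
    · rw [cfMat_succ, Function.update_self,
        cfMat_congr (b := c) fun i hi => Function.update_of_ne (by omega) _ _, hcN, ← hsplit]

theorem exists_mul_cfMat_lt {a : ℕ → ℤ} {x : ℝ} (ha : ∀ i, 1 ≤ i → 0 < a i)
    (hx : Irrational x) (hconv : Tendsto (convergent a) atTop (𝓝 x))
    (M : Matrix (Fin 2) (Fin 2) ℤ) (hθ : 0 < (M 1 0 : ℝ) * x + M 1 1) :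
    ∃ k, 1 ≤ k ∧ 0 < (M * cfMat a k) 1 1 ∧ (M * cfMat a k) 1 1 < (M * cfMat a k) 1 0 := by
  set θ := (M 1 0 : ℝ) * x + M 1 1
  -- `c p_n + d q_n = θ q_n - c (x q_n - p_n)` for the bottom row `(c, d)` of `M`
  have hclose (n : ℕ) :
      |((M * cfMat a (n + 1)) 1 0 : ℝ) - θ * cfQ a (n + 2)| ≤ |(M 1 0 : ℝ)| :=
    calc _ = |(M 1 0 : ℝ)| * |x * cfQ a (n + 2) - cfP a (n + 2)| := by
          rw [← abs_mul, ← abs_neg]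
          congr 1
          simp only [θ, cfMat, mul_apply, of_apply, cons_val', cons_val_zero, cons_val_one,
            cons_val_fin_one, Fin.sum_univ_two, Int.cast_add, Int.cast_mul]
          ring
      _ ≤ |(M 1 0 : ℝ)| :=
          mul_le_of_le_one_right (abs_nonneg _) (abs_mul_cfQ_sub_cfP_le_one ha hx hconv n)
  have hshift (n : ℕ) : (M * cfMat a (n + 1)) 1 1 = (M * cfMat a n) 1 0 := by
    simp [mul_apply, cfMat]
  obtain ⟨m, hm⟩ :=
    (((tendsto_cfQ ha).const_mul_atTop hθ).eventually_gt_atTop (2 * |(M 1 0 : ℝ)|)).exists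
  refine ⟨m + 3, by omega, ?_⟩
  rw [hshift]
  have h2 := abs_le.1 (hclose (m + 1))
  have h3 := abs_le.1 (hclose (m + 2))
  have hq1 : (cfQ a (m + 2) : ℝ) ≤ cfQ a (m + 3) := by
    have := cfQ_add_le ha m; have := cfQ_nonneg ha (m + 1); exact_mod_cast (by omega)
  have hq2 : (cfQ a (m + 2) + cfQ a (m + 3) : ℝ) ≤ cfQ a (m + 4) := by
    exact_mod_cast cfQ_add_le ha (m + 1)
  have e1 := mul_le_mul_of_nonneg_left hq1 hθ.le
  have e2 := mul_le_mul_of_nonneg_left hq2 hθ.le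
  have hc := abs_nonneg (M 1 0 : ℝ)
  constructor
  · exact_mod_cast (by linarith : (0 : ℝ) < (M * cfMat a (m + 2)) 1 0)
  · exact_mod_cast (by linarith : ((M * cfMat a (m + 2)) 1 0 : ℝ) < (M * cfMat a (m + 3)) 1 0)

def glue (c : ℕ → ℤ) (n : ℕ) (e : ℕ → ℤ) : ℕ → ℤ :=
  fun i => if i < n then c i else e (i - n)

theorem cfMat_glue (c : ℕ → ℤ) (n : ℕ) (e : ℕ → ℤ) :
    cfMat (glue c n e) n = cfMat c n :=
  cfMat_congr fun _ hi => if_pos hi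

theorem shift_glue (c : ℕ → ℤ) (n : ℕ) (e : ℕ → ℤ) : shift (glue c n e) n = e :=
  funext fun i => by simp [glue, shift]

theorem tendsto_convergent_of_shift {a : ℕ → ℤ} (ha : ∀ i, 1 ≤ i → 0 < a i) {m : ℕ}
    {y : ℝ} (h : Tendsto (convergent (shift a m)) atTop (𝓝 y))
    (hy : (cfMat a m 1 0 : ℝ) * y + cfMat a m 1 1 ≠ 0) :
    Tendsto (convergent a) atTop (𝓝 (mobius (cfMat a m) y)) := by
  rw [← tendsto_add_atTop_iff_nat m]
  refine ((continuousAt_mobius hy).tendsto.comp h).congr fun n => ?_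
  rw [add_comm]
  exact (convergent_add (cfQ_ne_zero (shift_pos ha m) n)).symm

theorem exists_shift_eq_iff (a b : ℕ → ℤ) :
    (∃ k l : ℕ, ∀ i, 1 ≤ i → a (k + i) = b (l + i)) ↔
      ∃ k l, shift a k = shift b l := by
  constructor
  · rintro ⟨k, l, h⟩
    refine ⟨k + 1, l + 1, funext fun i => ?_⟩
    simpa [shift, add_assoc, add_comm 1] using h (1 + i) (by omega)
  · rintro ⟨k, l, h⟩
    exact ⟨k, l, fun i _ => congrFun h i⟩

section equivalence

variable {α β : ℝ} {a b : ℕ → ℤ} (hα : Irrational α) (hβ : Irrational β)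
  (ha : ∀ i, 1 ≤ i → 0 < a i) (hb : ∀ i, 1 ≤ i → 0 < b i)
  (hαa : Tendsto (convergent a) atTop (𝓝 α)) (hβb : Tendsto (convergent b) atTop (𝓝 β))
include hα hβ ha hb hαa hβb

theorem exists_mobius_eq_of_shift_eq {k l : ℕ} (h : shift a k = shift b l) :
    ∃ M : Matrix (Fin 2) (Fin 2) ℤ, IsUnit M.det ∧ β = mobius M α := by
  have ht : completeQuotient a α k = completeQuotient b β l :=
    tendsto_nhds_unique (tendsto_convergent_shift ha hα hαa k)
      (h ▸ tendsto_convergent_shift hb hβ hβb l)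
  refine ⟨cfMat b l * (cfMat a k).adjugate, ?_, ?_⟩
  · rw [det_mul, det_adjugate]
    simpa using (isUnit_det_cfMat b l).mul (isUnit_det_cfMat a k)
  · rw [mobius_mul (mobius_denom_ne_zero (det_adjugate_cfMat_ne_zero k) hα)]
    calc β = mobius (cfMat b l) (completeQuotient b β l) := (mobius_completeQuotient hβ l).symm
      _ = _ := by rw [← ht]; rfl

theorem exists_shift_eq_of_mobius_eq_of_pos {M : Matrix (Fin 2) (Fin 2) ℤ} (hM : IsUnit M.det)
    (hpos : 0 < (M 1 0 : ℝ) * α + M 1 1) (h : β = mobius M α) :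
    ∃ k l, shift a k = shift b l := by
  obtain ⟨k, hk, h0, h1⟩ := exists_mul_cfMat_lt ha hα hαa M hpos
  obtain ⟨n, c, hc, hcN⟩ :=
    exists_cfMat_eq _ (by rw [det_mul]; exact hM.mul (isUnit_det_cfMat a k)) h0 h1
  set d := glue c (n + 1) (shift a k)
  have hd : ∀ i, 1 ≤ i → 0 < d i := fun i hi => by
    unfold d glue; split_ifs
    exacts [hc i hi, ha _ (by omega)]
  have htail := irrational_completeQuotient (a := a) hα k
  have hdβ : Tendsto (convergent d) atTop (𝓝 β) := by
    have hden := mobius_denom_ne_zero (isUnit_det_cfMat d (n + 1)).ne_zero htail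
    have htend := tendsto_convergent_shift ha hα hαa k
    rw [← shift_glue c (n + 1) (shift a k)] at htend
    convert tendsto_convergent_of_shift hd htend hden using 2
    rw [cfMat_glue, hcN, mobius_mul (mobius_denom_ne_zero (isUnit_det_cfMat a k).ne_zero htail),
      mobius_completeQuotient hα, h]
  refine ⟨k, n + 1, ?_⟩
  rw [eq_of_tendsto_convergent hb hd hβ hβb hdβ, shift_glue]

theorem exists_shift_eq_of_mobius_eq {M : Matrix (Fin 2) (Fin 2) ℤ} (hM : IsUnit M.det)
    (h : β = mobius M α) : ∃ k l, shift a k = shift b l := by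
  rcases (mobius_denom_ne_zero hM.ne_zero hα).lt_or_gt with hneg | hpos
  · have hM' : IsUnit (-M).det := by
      rwa [det_neg, Fintype.card_fin, even_two.neg_one_pow, one_mul]
    refine exists_shift_eq_of_mobius_eq_of_pos hα hβ ha hb hαa hβb hM' ?_ (by rwa [mobius_neg])
    simp only [Matrix.neg_apply, Int.cast_neg]
    linarith
  · exact exists_shift_eq_of_mobius_eq_of_pos hα hβ ha hb hαa hβb hM hpos h

end equivalence

end ContinuedFraction

open ContinuedFraction

/-- Hardy–Wright Thm 174: two irrational reals have continued fraction
expansions sharing a common tail iff they are `GL(2, ℤ)`-equivalent by a fractional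
linear transformation. Here `a` (resp. `b`) is the continued fraction coefficient
sequence of `α` (resp. `β`), characterised by positivity of the partial quotients and
convergence of the convergents. -/
theorem stmt6 (α β : ℝ) (hα : Irrational α) (hβ : Irrational β)
    (a b : ℕ → ℤ) (ha : ∀ i, 1 ≤ i → 0 < a i) (hb : ∀ i, 1 ≤ i → 0 < b i)
    (hava : Tendsto (fun k => (cfP a (k + 2) : ℝ) / (cfQ a (k + 2) : ℝ)) atTop (nhds α))
    (hbvb : Tendsto (fun k => (cfP b (k + 2) : ℝ) / (cfQ b (k + 2) : ℝ)) atTop (nhds β)) :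
    (∃ k l : ℕ, ∀ i : ℕ, 1 ≤ i → a (k + i) = b (l + i)) ↔
      (∃ M : Matrix (Fin 2) (Fin 2) ℤ, (M.det = 1 ∨ M.det = -1) ∧
        β = ((M 0 0 : ℝ) * α + (M 0 1 : ℝ)) / ((M 1 0 : ℝ) * α + (M 1 1 : ℝ))) := by
  simp_rw [exists_shift_eq_iff, ← Int.isUnit_iff]
  constructor
  · rintro ⟨k, l, h⟩
    exact exists_mobius_eq_of_shift_eq hα hβ ha hb hava hbvb h
  · rintro ⟨M, hM, h⟩
    exact exists_shift_eq_of_mobius_eq hα hβ ha hb hava hbvb hM h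
end

section
/- The real numbers (4 + √37)/7 and (5 + √37)/4 are not GL(2, ℤ)-equivalent: there is no integer matrix [[a,b],[c,d]] with ad − bc = ±1 such that (5 + √37)/4 = (a·(4+√37)/7 + b)/(c·(4+√37)/7 + d). -/
/-!
Clearing denominators in `β = (aα + b)/(cα + d)` and comparing the rational and irrational
parts forces `a = 7b - 3c` and `d = 4b - 3c`, after which `ad - bc = ±1` says that
`x = 28b - 17c`, `y = c` solve `x² - 37y² = ±28` with `x ≡ 11y (mod 28)`. The conditions
`x² - 37y² = ±28`, `x ≡ ±11y (mod 28)` are invariant under sign changes of `x` and `y` and under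
multiplication of `x + y√37` by the unit `6 - √37` of norm `-1`. For `x, y ≥ 0` that
multiplication strictly decreases `|y|` once `y ≥ 2`, while `y ≤ 1` has no solutions.
-/

lemma Irrational.eq_zero_of_intCast_mul_eq {s : ℝ} (hs : Irrational s) {m n : ℤ}
    (h : (m : ℝ) * s = n) : m = 0 ∧ n = 0 := by
  have hm : m = 0 := by
    by_contra hm
    exact (hs.intCast_mul hm).ne_int n h
  subst hm
  rw [Int.cast_zero, zero_mul, eq_comm, Int.cast_eq_zero] at h
  exact ⟨rfl, h⟩

def NormPm28Cong (x y : ℤ) : Prop :=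
  (x ^ 2 - 37 * y ^ 2 = 28 ∨ x ^ 2 - 37 * y ^ 2 = -28) ∧ (28 ∣ x - 11 * y ∨ 28 ∣ x + 11 * y)

namespace NormPm28Cong

variable {x y : ℤ}

lemma abs (h : NormPm28Cong x y) : NormPm28Cong |x| |y| := by
  obtain ⟨hnorm, hcong⟩ := h
  refine ⟨by simpa only [sq_abs] using hnorm, ?_⟩
  rcases abs_cases x with ⟨hx, -⟩ | ⟨hx, -⟩ <;> rcases abs_cases y with ⟨hy, -⟩ | ⟨hy, -⟩ <;>
    omega

lemma mul_unit (h : NormPm28Cong x y) : NormPm28Cong (6 * x - 37 * y) (x - 6 * y) := by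
  obtain ⟨hnorm, hcong⟩ := h
  have hnorm' : (6 * x - 37 * y) ^ 2 - 37 * (x - 6 * y) ^ 2 = -(x ^ 2 - 37 * y ^ 2) := by ring
  exact ⟨by omega, by omega⟩

lemma two_le (h : NormPm28Cong x y) (hx : 0 ≤ x) (hy : 0 ≤ y) : 2 ≤ y := by
  obtain ⟨hnorm, hcong⟩ := h
  by_contra! hy2
  obtain rfl | rfl : y = 0 ∨ y = 1 := by omega
  · rcases hnorm with h | h
    · have h5 : x ≤ 5 := by nlinarith
      have h6 : 6 ≤ x := by nlinarith
      omega
    · nlinarith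
  · rcases hnorm with h | h
    · have h8 : x ≤ 8 := by nlinarith
      have h9 : 9 ≤ x := by nlinarith
      omega
    · have hx3 : x = 3 := by nlinarith
      omega

lemma abs_sub_six_mul_lt (h : NormPm28Cong x y) (hx : 0 ≤ x) (hy : 0 ≤ y) :
    |x - 6 * y| < y := by
  have hy2 := h.two_le hx hy
  have hlow : 5 * y < x := by
    by_contra! hxy
    have : x ^ 2 ≤ 25 * y ^ 2 := by nlinarith
    rcases h.1 with h | h <;> nlinarith
  have hupp : x < 7 * y := by
    by_contra! hxy
    have : 49 * y ^ 2 ≤ x ^ 2 := by nlinarith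
    rcases h.1 with h | h <;> nlinarith
  rw [abs_sub_lt_iff]
  constructor <;> linarith

end NormPm28Cong

theorem not_normPm28Cong (x y : ℤ) : ¬ NormPm28Cong x y := by
  suffices ∀ n : ℕ, ∀ x y : ℤ, y.natAbs = n → ¬ NormPm28Cong x y from this _ x y rfl
  intro n
  induction n using Nat.strong_induction_on with
  | _ n ih =>
    rintro x y rfl h
    have hdesc := h.abs.abs_sub_six_mul_lt (abs_nonneg x) (abs_nonneg y)
    exact ih _ (by zify; simpa only [Int.natCast_natAbs, abs_abs] using hdesc) _ _ rfl
      h.abs.mul_unit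

lemma eq_of_moebius_eq {a b c d : ℤ}
    (h : (5 + √37) / 4 = (a * ((4 + √37) / 7) + b) / (c * ((4 + √37) / 7) + d)) :
    a = 7 * b - 3 * c ∧ d = 4 * b - 3 * c := by
  have hs : √37 ^ 2 = 37 := Real.sq_sqrt (by norm_num)
  rw [show (c : ℝ) * ((4 + √37) / 7) + d = ((c : ℝ) * (4 + √37) + 7 * d) / 7 by ring] at h
  have hden : (c : ℝ) * (4 + √37) + 7 * d ≠ 0 := by
    intro h0
    rw [h0, zero_div, div_zero] at h
    linarith [Real.sqrt_nonneg 37]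
  have hlin :
      ((9 * c + 7 * d - 4 * a : ℤ) : ℝ) * √37 = (16 * a + 28 * b - 57 * c - 35 * d : ℤ) := by
    rw [eq_div_iff (div_ne_zero hden (by norm_num))] at h
    push_cast
    linear_combination 28 * h - (c : ℝ) * hs
  have hirr : Irrational √37 := by exact_mod_cast (by norm_num : Nat.Prime 37).irrational_sqrt
  obtain ⟨h1, h2⟩ := hirr.eq_zero_of_intCast_mul_eq hlin
  omega

/-- The real numbers `(4 + √37)/7` and `(5 + √37)/4` are not
`GL(2, ℤ)`-equivalent under fractional linear transformations. -/
theorem stmt7 :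
    ¬ ∃ a b c d : ℤ, (a * d - b * c = 1 ∨ a * d - b * c = -1) ∧
      (5 + Real.sqrt 37) / 4 =
        ((a : ℝ) * ((4 + Real.sqrt 37) / 7) + (b : ℝ)) /
          ((c : ℝ) * ((4 + Real.sqrt 37) / 7) + (d : ℝ)) := by
  rintro ⟨a, b, c, d, hdet, h⟩
  obtain ⟨rfl, rfl⟩ := eq_of_moebius_eq h
  have hnorm : (28 * b - 17 * c) ^ 2 - 37 * c ^ 2 =
      28 * ((7 * b - 3 * c) * (4 * b - 3 * c) - b * c) := by
    ring
  exact not_normPm28Cong (28 * b - 17 * c) c ⟨by omega, Or.inl ⟨b - c, by ring⟩⟩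
end

section
/- The matrices M_1 = [[10, 7],[3, 2]] and M_2 = [[11, 4],[3, 1]] have the same characteristic polynomial (hence the same eigenvalues 6 ± √37), but they are not conjugate in GL(2, ℤ): there is no P ∈ GL(2, ℤ) with P M_1 P⁻¹ = M_2. -/
open Polynomial

/-!
A conjugacy `P M₁ = M₂ P` with `P = !![a, b; c, d]` forces `a = 3c + d` and `3b = 7c + d`, so
`x = 3d + 4c`, `y = c` satisfy `x² - 37y² = 9 det P = ±9` and `x ≡ y [ZMOD 9]`. Multiplying
`x + y√37` by the fundamental unit `6 ± √37` (norm `-1`) preserves both conditions and, with the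
right sign, strictly decreases `|y|`; at `y = 0` the conditions give `x² = 9` with `9 ∣ x`, which
is absurd.
-/

theorem exists_natAbs_lt_of_sq_sub_37_mul_sq {x y : ℤ} (h : (x ^ 2 - 37 * y ^ 2) ^ 2 = 81)
    (h9 : 9 ∣ x - y) (hy : y ≠ 0) :
    ∃ x' y' : ℤ, (x' ^ 2 - 37 * y' ^ 2) ^ 2 = 81 ∧ 9 ∣ x' - y' ∧ y'.natAbs < y.natAbs := by
  have hy2 : 1 ≤ y ^ 2 := by nlinarith [sq_pos_of_ne_zero hy]
  -- `(x² + 35y²)² - (12xy)² = (x² - 37y²)² - 144y⁴`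
  have hsq : (x ^ 2 + 35 * y ^ 2) ^ 2 < (12 * x * y) ^ 2 := by nlinarith
  have hlt : x ^ 2 + 35 * y ^ 2 < |12 * x * y| :=
    (le_abs_self _).trans_lt (sq_lt_sq.mp hsq)
  rcases lt_abs.mp hlt with hpos | hneg
  · refine ⟨6 * x - 37 * y, 6 * y - x, by linear_combination h, by omega, ?_⟩
    exact Int.natAbs_lt_iff_sq_lt.mpr (by linear_combination hpos)
  · refine ⟨6 * x + 37 * y, x + 6 * y, by linear_combination h, by omega, ?_⟩
    exact Int.natAbs_lt_iff_sq_lt.mpr (by linear_combination hneg)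

theorem not_dvd_sub_of_sq_sub_37_mul_sq {x y : ℤ} (h : (x ^ 2 - 37 * y ^ 2) ^ 2 = 81) :
    ¬ 9 ∣ x - y := by
  induction hn : y.natAbs using Nat.strong_induction_on generalizing x y with
  | _ n ih =>
    intro h9
    rcases eq_or_ne y 0 with rfl | hy
    · have hx : x ^ 4 = 81 := by linear_combination h
      have := pow_dvd_pow_of_dvd (by simpa using h9) 4
      rw [hx] at this
      norm_num at this
    · obtain ⟨x', y', h', h9', hlt⟩ := exists_natAbs_lt_of_sq_sub_37_mul_sq h h9 hy
      exact ih _ (hn ▸ hlt) h' rfl h9'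

theorem sq_sub_37_mul_sq_of_mul_eq_mul {P : Matrix (Fin 2) (Fin 2) ℤ} (hu : IsUnit P.det)
    (hP : P * !![10, 7; 3, 2] = !![11, 4; 3, 1] * P) :
    ((3 * P 1 1 + 4 * P 1 0) ^ 2 - 37 * P 1 0 ^ 2) ^ 2 = 81 ∧
      9 ∣ (3 * P 1 1 + 4 * P 1 0) - P 1 0 := by
  have e00 := congrFun₂ hP 0 0
  have e10 := congrFun₂ hP 1 0
  simp only [Matrix.mul_apply, Fin.sum_univ_two, Matrix.of_apply, Matrix.cons_val',
    Matrix.cons_val_zero, Matrix.cons_val_fin_one, Matrix.cons_val_one, one_mul] at e00 e10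
  have ha : P 0 0 = 3 * P 1 0 + P 1 1 := by linarith
  have hb : 3 * P 0 1 = 7 * P 1 0 + P 1 1 := by linarith
  have hnorm : (3 * P 1 1 + 4 * P 1 0) ^ 2 - 37 * P 1 0 ^ 2 = 9 * P.det := by
    rw [Matrix.det_fin_two]
    linear_combination (-9 * P 1 1) * ha + 3 * P 1 0 * hb
  exact ⟨by rw [hnorm, mul_pow, Int.isUnit_sq hu]; norm_num, by omega⟩

/-- `M₁ = [[10, 7], [3, 2]]` and `M₂ = [[11, 4], [3, 1]]` have the same
characteristic polynomial `x² − 12x − 1` (hence the same eigenvalues `6 ± √37`), but are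
not conjugate in `GL(2, ℤ)`. -/
theorem stmt8 :
    (!![(10 : ℤ), 7; 3, 2]).charpoly = (!![(11 : ℤ), 4; 3, 1]).charpoly ∧
    (!![(10 : ℤ), 7; 3, 2]).charpoly = X ^ 2 - C 12 * X - C 1 ∧
    ((!![(10 : ℤ), 7; 3, 2]).charpoly.map (Int.castRingHom ℝ)).IsRoot (6 + Real.sqrt 37) ∧
    ((!![(10 : ℤ), 7; 3, 2]).charpoly.map (Int.castRingHom ℝ)).IsRoot (6 - Real.sqrt 37) ∧
    ¬ ∃ P : Matrix (Fin 2) (Fin 2) ℤ, IsUnit P.det ∧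
        P * !![(10 : ℤ), 7; 3, 2] * P⁻¹ = !![(11 : ℤ), 4; 3, 1] := by
  have h₁ : (!![(10 : ℤ), 7; 3, 2]).charpoly = X ^ 2 - C 12 * X - C 1 := by
    rw [Matrix.charpoly_fin_two, Matrix.trace_fin_two_of, Matrix.det_fin_two_of]
    norm_num [sub_eq_add_neg]
  have h₂ : (!![(11 : ℤ), 4; 3, 1]).charpoly = X ^ 2 - C 12 * X - C 1 := by
    rw [Matrix.charpoly_fin_two, Matrix.trace_fin_two_of, Matrix.det_fin_two_of]
    norm_num [sub_eq_add_neg]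
  have hs : Real.sqrt 37 ^ 2 = 37 := Real.sq_sqrt (by norm_num)
  refine ⟨h₁.trans h₂.symm, h₁, ?_, ?_, ?_⟩
  · simp [h₁, IsRoot]
    linear_combination hs
  · simp [h₁, IsRoot]
    linear_combination hs
  · rintro ⟨P, hu, hconj⟩
    have hP : P * !![10, 7; 3, 2] = !![11, 4; 3, 1] * P := by
      rw [← hconj, Matrix.nonsing_inv_mul_cancel_right _ _ hu]
    obtain ⟨hnorm, h9⟩ := sq_sub_37_mul_sq_of_mul_eq_mul hu hP
    exact not_dvd_sub_of_sq_sub_37_mul_sq hnorm h9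
end

section
/- Let (b_n)_{n≥0} be a sequence of positive reals and consider the continued fraction b_0 + 1/(b_1 + 1/(b_2 + ⋯)) with convergents A_n/B_n defined by the standard recurrences. If ∑ b_n diverges, then the sequence of convergents A_n/B_n converges to a single limit; moreover the even-indexed convergents increase and the odd-indexed convergents decrease (Van Vleck's theorem, divergent case). -/
open Filter Finset

/-! The determinant identity `A (n + 1) * B n - A n * B (n + 1) = (-1) ^ (n + 1)` shows that
consecutive convergents differ by `±1 / (B (n + 1) * B (n + 2))` and convergents two steps apart
by `b (n + 2) * (-1) ^ n / (B (n + 1) * B (n + 3))`. Hence the `A (2n+1) / B (2n+1)` increase, the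
`A (2n+2) / B (2n+2)` decrease, and these two sequences squeeze together as soon as
`B (n + 1) * B (n + 2) → ∞`. That product grows by `b (n + 2) * B (n + 2) ^ 2` at each step,
and `B` is bounded below by `min 1 (b 1)`, so it dominates a multiple of the divergent `∑ b`. -/

lemma tendsto_of_tendsto_even_of_tendsto_odd {x : ℕ → ℝ} {L : ℝ}
    (heven : Tendsto (fun n => x (2 * n)) atTop (nhds L))
    (hodd : Tendsto (fun n => x (2 * n + 1)) atTop (nhds L)) :
    Tendsto x atTop (nhds L) := by
  rw [Metric.tendsto_atTop] at heven hodd ⊢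
  intro ε hε
  obtain ⟨N₁, hN₁⟩ := heven ε hε
  obtain ⟨N₂, hN₂⟩ := hodd ε hε
  refine ⟨2 * (N₁ + N₂) + 2, fun n hn => ?_⟩
  obtain ⟨k, rfl | rfl⟩ := Nat.even_or_odd' n
  · exact hN₁ k (by omega)
  · exact hN₂ k (by omega)

lemma exists_tendsto_of_monotone_even_of_antitone_odd {x : ℕ → ℝ}
    (heven : Monotone fun n => x (2 * n)) (hodd : Antitone fun n => x (2 * n + 1))
    (hgap : Tendsto (fun n => x (2 * n + 1) - x (2 * n)) atTop (nhds 0)) :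
    ∃ L, Tendsto x atTop (nhds L) := by
  have hgap_anti : Antitone fun n => x (2 * n + 1) - x (2 * n) :=
    fun _ _ hmn => sub_le_sub (hodd hmn) (heven hmn)
  have hgap_nonneg : ∀ n, 0 ≤ x (2 * n + 1) - x (2 * n) := hgap_anti.le_of_tendsto hgap
  have hbdd : BddAbove (Set.range fun n => x (2 * n)) := by
    refine ⟨x 1, ?_⟩
    rintro _ ⟨n, rfl⟩
    linarith [hgap_nonneg n, hodd (Nat.zero_le n)]
  have hevenL := tendsto_atTop_ciSup heven hbdd
  refine ⟨_, tendsto_of_tendsto_even_of_tendsto_odd hevenL ?_⟩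
  simpa using hevenL.add hgap

namespace Convergents

section Recurrence

variable {R : Type*} [CommRing R] {b A B : ℕ → R}

lemma det_succ (hA0 : A 0 = 1) (hB0 : B 0 = 0) (hB1 : B 1 = 1)
    (hA : ∀ n, A (n + 2) = b (n + 1) * A (n + 1) + A n)
    (hB : ∀ n, B (n + 2) = b (n + 1) * B (n + 1) + B n) (n : ℕ) :
    A (n + 1) * B n - A n * B (n + 1) = (-1) ^ (n + 1) := by
  induction n with
  | zero => simp [hA0, hB0, hB1]
  | succ k ih => rw [hA, hB, pow_succ, ← ih]; ring

lemma det_add_two (hA0 : A 0 = 1) (hB0 : B 0 = 0) (hB1 : B 1 = 1)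
    (hA : ∀ n, A (n + 2) = b (n + 1) * A (n + 1) + A n)
    (hB : ∀ n, B (n + 2) = b (n + 1) * B (n + 1) + B n) (n : ℕ) :
    A (n + 3) * B (n + 1) - A (n + 1) * B (n + 3) = b (n + 2) * (-1) ^ n := by
  have h := det_succ hA0 hB0 hB1 hA hB (n + 1)
  rw [hA, hB]
  linear_combination b (n + 2) * h

end Recurrence

section Field

variable {K : Type*} [Field K] {b A B : ℕ → K}

lemma div_sub_div_succ (hA0 : A 0 = 1) (hB0 : B 0 = 0) (hB1 : B 1 = 1)
    (hA : ∀ n, A (n + 2) = b (n + 1) * A (n + 1) + A n)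
    (hB : ∀ n, B (n + 2) = b (n + 1) * B (n + 1) + B n) {n : ℕ}
    (hn₁ : B (n + 1) ≠ 0) (hn₂ : B (n + 2) ≠ 0) :
    A (n + 2) / B (n + 2) - A (n + 1) / B (n + 1) = (-1) ^ n / (B (n + 1) * B (n + 2)) := by
  rw [div_sub_div _ _ hn₂ hn₁, mul_comm (B (n + 2)), det_succ hA0 hB0 hB1 hA hB (n + 1)]
  ring

lemma div_sub_div_add_two (hA0 : A 0 = 1) (hB0 : B 0 = 0) (hB1 : B 1 = 1)
    (hA : ∀ n, A (n + 2) = b (n + 1) * A (n + 1) + A n)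
    (hB : ∀ n, B (n + 2) = b (n + 1) * B (n + 1) + B n) {n : ℕ}
    (hn₁ : B (n + 1) ≠ 0) (hn₃ : B (n + 3) ≠ 0) :
    A (n + 3) / B (n + 3) - A (n + 1) / B (n + 1) =
      b (n + 2) * (-1) ^ n / (B (n + 1) * B (n + 3)) := by
  rw [div_sub_div _ _ hn₃ hn₁, mul_comm (B (n + 3)), det_add_two hA0 hB0 hB1 hA hB n]
  ring

end Field

section Positive

variable {b A B : ℕ → ℝ}

lemma denom_pos (hb : ∀ n, 0 < b n) (hB0 : B 0 = 0) (hB1 : B 1 = 1)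
    (hB : ∀ n, B (n + 2) = b (n + 1) * B (n + 1) + B n) (n : ℕ) : 0 < B (n + 1) := by
  suffices ∀ n, 0 ≤ B n ∧ 0 < B (n + 1) from (this n).2
  intro n
  induction n with
  | zero => simp [hB0, hB1]
  | succ k ih =>
    refine ⟨ih.2.le, ?_⟩
    rw [hB]
    nlinarith [hb (k + 1), ih.1, ih.2]

lemma min_one_le_denom (hb : ∀ n, 0 < b n) (hB0 : B 0 = 0) (hB1 : B 1 = 1)
    (hB : ∀ n, B (n + 2) = b (n + 1) * B (n + 1) + B n) (n : ℕ) :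
    min 1 (b 1) ≤ B (n + 1) := by
  induction n using Nat.twoStepInduction with
  | zero => simp [hB1]
  | one => simp [hB, hB0, hB1]
  | more k ih _ =>
    rw [hB]
    nlinarith [hb (k + 2), denom_pos hb hB0 hB1 hB (k + 1)]

lemma tendsto_denom_mul_denom_atTop (hb : ∀ n, 0 < b n) (hB0 : B 0 = 0) (hB1 : B 1 = 1)
    (hB : ∀ n, B (n + 2) = b (n + 1) * B (n + 1) + B n)
    (hdiv : Tendsto (fun N => ∑ i ∈ range N, b i) atTop atTop) :
    Tendsto (fun n => B (n + 1) * B (n + 2)) atTop atTop := by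
  set m := min 1 (b 1)
  have hm : 0 < m := lt_min one_pos (hb 1)
  have hbound : ∀ n, m ^ 2 * ∑ i ∈ range (n + 2), b i - m ^ 2 * (b 0 + b 1) ≤
      B (n + 1) * B (n + 2) := by
    intro n
    induction n with
    | zero =>
      simp only [sum_range_succ, sum_range_zero, zero_add, sub_self]
      exact (mul_pos (denom_pos hb hB0 hB1 hB 0) (denom_pos hb hB0 hB1 hB 1)).le
    | succ k ih =>
      have hmB : m ^ 2 ≤ B (k + 2) ^ 2 :=
        pow_le_pow_left₀ hm.le (min_one_le_denom hb hB0 hB1 hB (k + 1)) 2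
      rw [sum_range_succ, hB (k + 1)]
      nlinarith [mul_le_mul_of_nonneg_left hmB (hb (k + 2)).le]
  refine tendsto_atTop_mono hbound (tendsto_atTop_add_const_right _ _ ?_)
  exact (hdiv.comp (tendsto_add_atTop_nat 2)).const_mul_atTop (pow_pos hm 2)

lemma monotone_convergent_odd (hb : ∀ n, 0 < b n) (hA0 : A 0 = 1) (hB0 : B 0 = 0)
    (hB1 : B 1 = 1) (hA : ∀ n, A (n + 2) = b (n + 1) * A (n + 1) + A n)
    (hB : ∀ n, B (n + 2) = b (n + 1) * B (n + 1) + B n) :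
    Monotone fun n => A (2 * n + 1) / B (2 * n + 1) := by
  refine monotone_nat_of_le_succ fun n => sub_nonneg.1 ?_
  have hpos := denom_pos hb hB0 hB1 hB
  show 0 ≤ A (2 * n + 3) / B (2 * n + 3) - A (2 * n + 1) / B (2 * n + 1)
  rw [div_sub_div_add_two hA0 hB0 hB1 hA hB (hpos (2 * n)).ne' (hpos (2 * n + 2)).ne',
    (even_two_mul n).neg_one_pow, mul_one]
  exact (div_pos (hb _) (mul_pos (hpos _) (hpos _))).le

lemma antitone_convergent_even (hb : ∀ n, 0 < b n) (hA0 : A 0 = 1) (hB0 : B 0 = 0)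
    (hB1 : B 1 = 1) (hA : ∀ n, A (n + 2) = b (n + 1) * A (n + 1) + A n)
    (hB : ∀ n, B (n + 2) = b (n + 1) * B (n + 1) + B n) :
    Antitone fun n => A (2 * n + 2) / B (2 * n + 2) := by
  refine antitone_nat_of_succ_le fun n => sub_nonpos.1 ?_
  have hpos := denom_pos hb hB0 hB1 hB
  show A (2 * n + 1 + 3) / B (2 * n + 1 + 3) - A (2 * n + 1 + 1) / B (2 * n + 1 + 1) ≤ 0
  rw [div_sub_div_add_two hA0 hB0 hB1 hA hB (hpos (2 * n + 1)).ne' (hpos (2 * n + 3)).ne',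
    (odd_two_mul_add_one n).neg_one_pow, mul_neg_one, neg_div]
  exact neg_nonpos.2 (div_pos (hb _) (mul_pos (hpos _) (hpos _))).le

end Positive

end Convergents

open Convergents

theorem stmt10_general (b : ℕ → ℝ) (hb : ∀ n, 0 < b n)
    (A B : ℕ → ℝ)
    (hA0 : A 0 = 1)
    (hB0 : B 0 = 0) (hB1 : B 1 = 1)
    (hA : ∀ n, A (n + 2) = b (n + 1) * A (n + 1) + A n)
    (hB : ∀ n, B (n + 2) = b (n + 1) * B (n + 1) + B n)
    (hdiv : Tendsto (fun N => ∑ i ∈ Finset.range N, b i) atTop atTop) :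
    (∃ L : ℝ, Tendsto (fun n => A (n + 1) / B (n + 1)) atTop (nhds L)) ∧
    Monotone (fun n => A (2 * n + 1) / B (2 * n + 1)) ∧
    Antitone (fun n => A (2 * n + 2) / B (2 * n + 2)) := by
  have hodd := monotone_convergent_odd hb hA0 hB0 hB1 hA hB
  have heven := antitone_convergent_even hb hA0 hB0 hB1 hA hB
  refine ⟨exists_tendsto_of_monotone_even_of_antitone_odd hodd heven ?_, hodd, heven⟩
  have hpos := denom_pos hb hB0 hB1 hB
  have hgap : ∀ n, A (2 * n + 2) / B (2 * n + 2) - A (2 * n + 1) / B (2 * n + 1) =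
      1 / (B (2 * n + 1) * B (2 * n + 2)) := fun n => by
    rw [div_sub_div_succ hA0 hB0 hB1 hA hB (hpos (2 * n)).ne' (hpos (2 * n + 1)).ne',
      (even_two_mul n).neg_one_pow]
  simp only [hgap]
  exact tendsto_const_nhds.div_atTop <|
    (tendsto_denom_mul_denom_atTop hb hB0 hB1 hB hdiv).comp (tendsto_id.const_mul_atTop' two_pos)

/-- Van Vleck, divergent case: for a continued fraction
`b_0 + 1/(b_1 + 1/(b_2 + ⋯))` with positive real entries, if `∑ b_n` diverges then the
convergents `A_n/B_n` converge to a single limit; moreover the even-indexed convergents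
increase and the odd-indexed convergents decrease. Here `A (n+1) = A_n`, `B (n+1) = B_n`
with conventions `A 0 = A_{-1} = 1`, `B 0 = B_{-1} = 0`. -/
theorem stmt10 (b : ℕ → ℝ) (hb : ∀ n, 0 < b n)
    (A B : ℕ → ℝ)
    (hA0 : A 0 = 1) (hA1 : A 1 = b 0)
    (hB0 : B 0 = 0) (hB1 : B 1 = 1)
    (hA : ∀ n, A (n + 2) = b (n + 1) * A (n + 1) + A n)
    (hB : ∀ n, B (n + 2) = b (n + 1) * B (n + 1) + B n)
    (hdiv : Tendsto (fun N => ∑ i ∈ Finset.range N, b i) atTop atTop) :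
    (∃ L : ℝ, Tendsto (fun n => A (n + 1) / B (n + 1)) atTop (nhds L)) ∧
    Monotone (fun n => A (2 * n + 1) / B (2 * n + 1)) ∧
    Antitone (fun n => A (2 * n + 2) / B (2 * n + 2)) :=
  stmt10_general b hb A B hA0 hB0 hB1 hA hB hdiv
end

section
/- Let (b_n)_{n≥1} be a sequence of positive reals with ∑ b_n < ∞, and let A_n/B_n be the convergents of the continued fraction b_0 + K_{n=1}^∞ (1/b_n). Then the even convergents A_{2n}/B_{2n} and the odd convergents A_{2n−1}/B_{2n−1} converge monotonically to two distinct limits (Van Vleck's theorem, convergent case). -/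
open Filter Finset

/-!
The determinant formula `A_{n+1} B_n - A_n B_{n+1} = (-1)^n` and its two-step version
`A_{n+2} B_n - A_n B_{n+2} = (-1)^n b_{n+2}` show that the even convergents increase, the odd ones
decrease, and every even convergent lies below the adjacent odd one at distance `1 / (B_n B_{n+1})`.
Since `B_{n+2} ≤ (1 + b_{n+2}) max(B_n, B_{n+1})`, the denominators stay below `exp (∑ b_n)`, so this
distance is bounded below by `exp (-2 ∑ b_n) > 0` and the two limits are distinct.
-/

theorem exists_limits_add_le_of_monotone_of_antitone {u v : ℕ → ℝ} {δ : ℝ}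
    (hu : Monotone u) (hv : Antitone v) (huv : ∀ n, u n + δ ≤ v n) :
    ∃ a c : ℝ, a + δ ≤ c ∧ Tendsto u atTop (nhds a) ∧ Tendsto v atTop (nhds c) := by
  have hu_bdd : BddAbove (Set.range u) :=
    ⟨v 0 - δ, by rintro _ ⟨n, rfl⟩; linarith [huv n, hv (Nat.zero_le n)]⟩
  have hv_bdd : BddBelow (Set.range v) :=
    ⟨u 0 + δ, by rintro _ ⟨n, rfl⟩; linarith [huv n, hu (Nat.zero_le n)]⟩
  have hu_lim := tendsto_atTop_ciSup hu hu_bdd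
  have hv_lim := tendsto_atTop_ciInf hv hv_bdd
  refine ⟨_, _, ?_, hu_lim, hv_lim⟩
  have hgap : δ ≤ (⨅ n, v n) - ⨆ n, u n :=
    ge_of_tendsto' (hv_lim.sub hu_lim) fun n => by linarith [huv n]
  linarith

section Continuants

variable {b A B : ℕ → ℝ}

theorem continuant_pos (hb : ∀ n, 0 < b n) (hB0 : B 0 = 0) (hB1 : B 1 = 1)
    (hB : ∀ n, B (n + 2) = b (n + 1) * B (n + 1) + B n) (n : ℕ) : 0 < B (n + 1) := by
  have key : ∀ n, 0 ≤ B n ∧ 0 < B (n + 1) := by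
    intro n
    induction n with
    | zero => simp [hB0, hB1]
    | succ n ih =>
      refine ⟨ih.2.le, ?_⟩
      rw [hB n]
      have := mul_pos (hb (n + 1)) ih.2
      linarith [ih.1]
  exact (key n).2

theorem continuant_le_exp_sum (hb : ∀ n, 0 ≤ b n) (hB0 : B 0 = 0) (hB1 : B 1 = 1)
    (hB : ∀ n, B (n + 2) = b (n + 1) * B (n + 1) + B n) (n : ℕ) :
    B n ≤ Real.exp (∑ k ∈ range n, b (k + 1)) := by
  set E : ℕ → ℝ := fun n => Real.exp (∑ k ∈ range n, b (k + 1))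
  have hE_succ : ∀ n, E (n + 1) = Real.exp (b (n + 1)) * E n := fun n => by
    simp only [E, sum_range_succ, Real.exp_add, mul_comm]
  have key : ∀ n, B n ≤ E n ∧ B (n + 1) ≤ E n := by
    intro n
    induction n with
    | zero => simp [E, hB0, hB1]
    | succ n ih =>
      have hE_pos : 0 < E n := Real.exp_pos _
      have h_exp : 1 + b (n + 1) ≤ Real.exp (b (n + 1)) := by
        linarith [Real.add_one_le_exp (b (n + 1))]
      rw [hE_succ, hB n]
      constructor
      · nlinarith [ih.2, hb (n + 1)]
      · nlinarith [mul_le_mul_of_nonneg_left ih.2 (hb (n + 1)), ih.1]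
  exact (key n).1

theorem continuant_le_exp_tsum (hb : ∀ n, 0 ≤ b n) (hB0 : B 0 = 0) (hB1 : B 1 = 1)
    (hB : ∀ n, B (n + 2) = b (n + 1) * B (n + 1) + B n) (hsum : Summable fun n => b (n + 1))
    (n : ℕ) : B n ≤ Real.exp (∑' k, b (k + 1)) :=
  (continuant_le_exp_sum hb hB0 hB1 hB n).trans <|
    Real.exp_le_exp.mpr (hsum.sum_le_tsum _ fun k _ => hb (k + 1))

theorem continuant_cross_succ (hA0 : A 0 = 1) (hA1 : A 1 = b 0) (hB0 : B 0 = 0)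
    (hB1 : B 1 = 1) (hA : ∀ n, A (n + 2) = b (n + 1) * A (n + 1) + A n)
    (hB : ∀ n, B (n + 2) = b (n + 1) * B (n + 1) + B n) (n : ℕ) :
    A (n + 1) * B n - A n * B (n + 1) = (-1) ^ (n + 1) := by
  induction n with
  | zero => simp [hA0, hA1, hB0, hB1]
  | succ n ih =>
    rw [hA n, hB n]
    linear_combination -ih

theorem continuant_cross_add_two (hA0 : A 0 = 1) (hA1 : A 1 = b 0) (hB0 : B 0 = 0)
    (hB1 : B 1 = 1) (hA : ∀ n, A (n + 2) = b (n + 1) * A (n + 1) + A n)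
    (hB : ∀ n, B (n + 2) = b (n + 1) * B (n + 1) + B n) (n : ℕ) :
    A (n + 3) * B (n + 1) - A (n + 1) * B (n + 3) = b (n + 2) * (-1) ^ n := by
  rw [hA (n + 1), hB (n + 1)]
  linear_combination b (n + 2) * continuant_cross_succ hA0 hA1 hB0 hB1 hA hB (n + 1)

end Continuants

/-- Van Vleck, convergent case: for a continued fraction
`b_0 + K_{n=1}^∞ (1/b_n)` with positive real entries such that `∑_{n≥1} b_n < ∞`, the
even-indexed convergents and the odd-indexed convergents converge monotonically to two
distinct limits. Here `A (n+1) = A_n`, `B (n+1) = B_n` with `A 0 = A_{-1} = 1`,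
`B 0 = B_{-1} = 0`. -/
theorem stmt11 (b : ℕ → ℝ) (hb : ∀ n, 0 < b n)
    (A B : ℕ → ℝ)
    (hA0 : A 0 = 1) (hA1 : A 1 = b 0)
    (hB0 : B 0 = 0) (hB1 : B 1 = 1)
    (hA : ∀ n, A (n + 2) = b (n + 1) * A (n + 1) + A n)
    (hB : ∀ n, B (n + 2) = b (n + 1) * B (n + 1) + B n)
    (hsum : Summable fun n => b (n + 1)) :
    ∃ LE LO : ℝ, LE ≠ LO ∧
      Monotone (fun n => A (2 * n + 1) / B (2 * n + 1)) ∧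
      Tendsto (fun n => A (2 * n + 1) / B (2 * n + 1)) atTop (nhds LE) ∧
      Antitone (fun n => A (2 * n + 2) / B (2 * n + 2)) ∧
      Tendsto (fun n => A (2 * n + 2) / B (2 * n + 2)) atTop (nhds LO) := by
  have hpos := continuant_pos hb hB0 hB1 hB
  have hcross := continuant_cross_succ hA0 hA1 hB0 hB1 hA hB
  have hcross₂ := continuant_cross_add_two hA0 hA1 hB0 hB1 hA hB
  set C := Real.exp (∑' k, b (k + 1))
  have hC : ∀ n, B n ≤ C := continuant_le_exp_tsum (fun n => (hb n).le) hB0 hB1 hB hsum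
  have hmono : Monotone (fun n => A (2 * n + 1) / B (2 * n + 1)) := by
    refine monotone_nat_of_le_succ fun n => ?_
    rw [show 2 * (n + 1) + 1 = 2 * n + 3 by ring, div_le_div_iff₀ (hpos _) (hpos _)]
    have h := hcross₂ (2 * n)
    rw [pow_mul, neg_one_sq, one_pow] at h
    linarith [hb (2 * n + 2)]
  have hanti : Antitone (fun n => A (2 * n + 2) / B (2 * n + 2)) := by
    refine antitone_nat_of_succ_le fun n => ?_
    rw [show 2 * (n + 1) + 2 = 2 * n + 1 + 3 by ring, div_le_div_iff₀ (hpos _) (hpos _)]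
    have h := hcross₂ (2 * n + 1)
    rw [pow_succ, pow_mul, neg_one_sq, one_pow] at h
    linarith [hb (2 * n + 1 + 2)]
  have hgap : ∀ n, A (2 * n + 1) / B (2 * n + 1) + 1 / C ^ 2 ≤ A (2 * n + 2) / B (2 * n + 2) := by
    intro n
    have h : A (2 * n + 2) * B (2 * n + 1) - A (2 * n + 1) * B (2 * n + 2) = 1 :=
      (hcross (2 * n + 1)).trans (Even.neg_one_pow ⟨n + 1, by ring⟩)
    have hB₁ : 0 < B (2 * n + 1) := hpos _
    have hB₂ : 0 < B (2 * n + 2) := hpos _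
    have hBB : B (2 * n + 1) * B (2 * n + 2) ≤ C ^ 2 := by
      rw [sq]; exact mul_le_mul (hC _) (hC _) hB₂.le (hB₁.le.trans (hC _))
    calc A (2 * n + 1) / B (2 * n + 1) + 1 / C ^ 2
        ≤ A (2 * n + 1) / B (2 * n + 1) + 1 / (B (2 * n + 1) * B (2 * n + 2)) := by
          gcongr
      _ = A (2 * n + 2) / B (2 * n + 2) := by
          rw [← h]
          field_simp
          ring
  obtain ⟨LE, LO, hle, hLE, hLO⟩ := exists_limits_add_le_of_monotone_of_antitone hmono hanti hgap
  have hδ : 0 < 1 / C ^ 2 := by positivity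
  exact ⟨LE, LO, by linarith, hmono, hLE, hanti, hLO⟩
end
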